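/- arXiv:2001.02062 — 7 statements merged into one kernel-verified Lean document; each statement's English description precedes it below -/
import Mathlib

section
/- Let K and L be locally finitely presentable categories and U: K → L a full embedding such that a morphism h of K is a pure monomorphism if and only if Uh is a regular monomorphism in L, and such that every regular injective object of L lies (up to isomorphism) in the image of U. If L has enough regular injectives, then an object K₀ of K is pure injective if and only if UK₀ is regular injective in L. -/
open CategoryTheory Limits Opposite

universe w v u u₂

namespace PureGen

variable {C : Type u} [Category.{v} C]

/-- An object is finitely presentable if its hom-functor preserves directed colimits
(colimits indexed by nonempty directed posets). -/
def IsFinitelyPresentableObj (X : C) : Prop :=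
  ∀ (J : Type w) (_ : Preorder J) (_ : IsDirected J (· ≤ ·)) (_ : Nonempty J),
    PreservesColimitsOfShape J (coyoneda.obj (op X))

/-- A cocomplete category is locally finitely presentable if there is, up to isomorphism,
a set of finitely presentable objects such that every object is a directed colimit of
objects from that set. -/
def IsLocallyFinitelyPresentable (C : Type u) [Category.{v} C] : Prop :=
  HasColimits C ∧
  ∃ (ι : Type v) (A : ι → C),
    (∀ i, IsFinitelyPresentableObj.{v} (A i)) ∧
    ∀ X : C, ∃ (J : Type v) (_ : Preorder J) (_ : IsDirected J (· ≤ ·)) (_ : Nonempty J)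
      (D : J ⥤ C) (c : Cocone D), Nonempty (IsColimit c) ∧ c.pt = X ∧
        ∀ j : J, ∃ i : ι, Nonempty (D.obj j ≅ A i)

/-- The class of pure monomorphisms: `h : K ⟶ L` is pure if in every commutative square
over a morphism `f : M ⟶ N` with `M`, `N` finitely presentable, `u` factors through `f`. -/
def pureMonomorphisms (C : Type u) [Category.{v} C] : MorphismProperty C :=
  fun K _L h => ∀ ⦃M N : C⦄ (f : M ⟶ N) (u : M ⟶ K) (v : N ⟶ _L),
    IsFinitelyPresentableObj.{v} M → IsFinitelyPresentableObj.{v} N →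
    u ≫ h = f ≫ v → ∃ g : N ⟶ K, f ≫ g = u

/-- An object is pure injective if it is injective with respect to all pure monomorphisms. -/
def IsPureInjective (Q : C) : Prop :=
  ∀ ⦃M N : C⦄ (h : M ⟶ N), pureMonomorphisms C h → ∀ f : M ⟶ Q, ∃ g : N ⟶ Q, h ≫ g = f

section Transfinite

variable {J : Type w} [Preorder J]

/-- The inclusion functor of the initial segment below `j`. -/
def iioFunctor (j : J) : Set.Iio j ⥤ J :=
  Monotone.functor (f := (Subtype.val : Set.Iio j → J)) (fun _ _ h => h)

/-- The cocone on the restriction of a chain to the initial segment below `j`,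
with apex `F.obj j`. -/
@[simps]
def coconeLT (F : J ⥤ C) (j : J) : Cocone (iioFunctor j ⋙ F) where
  pt := F.obj j
  ι :=
    { app := fun i => F.map (homOfLE i.2.le)
      naturality := fun i i' f => by
        dsimp [iioFunctor, Monotone.functor]
        rw [← F.map_comp, Category.comp_id]
        rfl }

end Transfinite

/-- `f` is a retract of `f'` in the arrow category. -/
def IsRetractOfArrow {X Y X' Y' : C} (f : X ⟶ Y) (f' : X' ⟶ Y') : Prop :=
  ∃ (i : Arrow.mk f ⟶ Arrow.mk f') (r : Arrow.mk f' ⟶ Arrow.mk f), i ≫ r = 𝟙 _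

/-- A class of morphisms is cofibrantly closed if it is closed under pushouts,
transfinite compositions, and retracts in the arrow category. -/
structure IsCofibrantlyClosed (W : MorphismProperty C) : Prop where
  pushout : ∀ ⦃A B A' B' : C⦄ (f : A ⟶ B) (g : A ⟶ A') (f' : A' ⟶ B') (g' : B ⟶ B'),
    IsPushout g f f' g' → W f → W f'
  transfinite : ∀ (J : Type v) (_ : LinearOrder J) (_ : OrderBot J) (_ : SuccOrder J)
    (_ : WellFoundedLT J) (F : J ⥤ C) (c : Cocone F), IsColimit c →
    (∀ j : J, Order.IsSuccLimit j → Nonempty (IsColimit (coconeLT F j))) →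
    (∀ j : J, ¬ IsMax j → W (F.map (homOfLE (Order.le_succ j)))) →
    W (c.ι.app ⊥)
  retract : ∀ ⦃X Y X' Y' : C⦄ (f : X ⟶ Y) (f' : X' ⟶ Y'),
    IsRetractOfArrow f f' → W f' → W f

/-- A class of morphisms is cofibrantly generated if it is the smallest cofibrantly
closed class containing some set of morphisms. -/
def IsCofibrantlyGenerated (W : MorphismProperty C) : Prop :=
  ∃ (ι : Type v) (A B : ι → C) (x : ∀ i, A i ⟶ B i),
    IsCofibrantlyClosed W ∧ (∀ i, W (x i)) ∧
    ∀ W' : MorphismProperty C, IsCofibrantlyClosed W' → (∀ i, W' (x i)) → W ≤ W'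

end PureGen

namespace PureGen

open CategoryTheory Limits

/-- The class of regular monomorphisms (equalizers of some pair of morphisms). -/
def regularMonomorphisms (D : Type u) [Category.{v} D] : MorphismProperty D :=
  fun _ _ f => Nonempty (RegularMono f)

/-- An object is regular injective if it is injective with respect to all regular
monomorphisms. -/
def IsRegularInjective {D : Type u} [Category.{v} D] (Q : D) : Prop :=
  ∀ ⦃M N : D⦄ (h : M ⟶ N), regularMonomorphisms D h → ∀ f : M ⟶ Q, ∃ g : N ⟶ Q, h ≫ g = f

/-- A category has enough regular injectives if every object admits a regular
monomorphism into a regular injective object. -/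
def HasEnoughRegularInjectives (D : Type u) [Category.{v} D] : Prop :=
  ∀ X : D, ∃ (Q : D) (h : X ⟶ Q), regularMonomorphisms D h ∧ IsRegularInjective Q

end PureGen

open CategoryTheory Limits in
noncomputable def PureGen.regularMonoCompIso {D : Type u₂} [Category.{v} D] {X Y Z : D}
    (e : X ⟶ Y) (i : Y ≅ Z) (he : RegularMono e) : RegularMono (e ≫ i.hom) where
  Z := he.Z
  left := i.inv ≫ he.left
  right := i.inv ≫ he.right
  w := by
    rw [Category.assoc, Category.assoc, i.hom_inv_id_assoc, i.hom_inv_id_assoc, he.w]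
  isLimit := Fork.IsLimit.mk' _ fun s => by
    have cond : (s.ι ≫ i.inv) ≫ he.left = (s.ι ≫ i.inv) ≫ he.right := by
      simpa [Category.assoc] using s.condition
    obtain ⟨l, hl⟩ := Fork.IsLimit.lift' he.isLimit (s.ι ≫ i.inv) cond
    simp only [Fork.ι_ofι] at hl
    refine ⟨l, ?_, ?_⟩
    · simp only [Fork.ι_ofι]
      rw [← Category.assoc, hl, Category.assoc, i.inv_hom_id]
      simp
    · intro m hm
      simp only [Fork.ι_ofι] at hm
      apply Fork.IsLimit.hom_ext he.isLimit
      simp only [Fork.ι_ofι]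
      rw [hl, ← hm]
      simp [Category.assoc]

open PureGen CategoryTheory Limits in
/-- Let K and L be locally finitely presentable categories and U : K ⥤ L a full embedding
such that a morphism h of K is pure iff U.map h is a regular monomorphism, and every
regular injective of L is isomorphic to an object in the image of U.  If L has enough
regular injectives, then an object K₀ of K is pure injective iff U.obj K₀ is regular
injective in L. -/

theorem pureInjective_iff_regularInjective
    (K : Type u) [Category.{v} K] (L : Type u₂) [Category.{v} L]
    (hK : PureGen.IsLocallyFinitelyPresentable K) (hL : PureGen.IsLocallyFinitelyPresentable L)
    (U : K ⥤ L) [U.Full] [U.Faithful]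
    (hpure : ∀ ⦃X Y : K⦄ (h : X ⟶ Y),
      pureMonomorphisms K h ↔ regularMonomorphisms L (U.map h))
    (himg : ∀ Q : L, IsRegularInjective Q → ∃ X : K, Nonempty (U.obj X ≅ Q))
    (henough : HasEnoughRegularInjectives L) :
    ∀ K₀ : K, IsPureInjective K₀ ↔ IsRegularInjective (U.obj K₀) := by
  intro K₀
  constructor
  · -- forward
    intro hpi
    obtain ⟨Q, e, ⟨hreg⟩, hQ⟩ := henough (U.obj K₀)
    obtain ⟨X, ⟨iso⟩⟩ := himg Q hQ
    -- k : K₀ ⟶ X with U.map k = e ≫ iso.inv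
    have hregk : RegularMono (e ≫ iso.symm.hom) :=
      PureGen.regularMonoCompIso e iso.symm hreg
    set k : K₀ ⟶ X := U.preimage (e ≫ iso.inv) with hk
    have hUk : U.map k = e ≫ iso.inv := U.map_preimage _
    have hkp : pureMonomorphisms K k := (hpure k).mpr ⟨hUk ▸ hregk⟩
    obtain ⟨r, hr⟩ := hpi k hkp (𝟙 K₀)
    intro M N h hh f
    obtain ⟨g, hg⟩ := hQ h hh (f ≫ e)
    refine ⟨g ≫ iso.inv ≫ U.map r, ?_⟩
    have : e ≫ iso.inv ≫ U.map r = 𝟙 (U.obj K₀) := by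
      rw [← Category.assoc, ← hUk, ← U.map_comp, hr, U.map_id]
    rw [← Category.assoc, hg, Category.assoc, this, Category.comp_id]
  · -- backward
    intro hri M N h hh f
    obtain ⟨g, hg⟩ := hri (U.map h) ((hpure h).mp hh) (U.map f)
    refine ⟨U.preimage g, ?_⟩
    apply U.map_injective
    rw [U.map_comp, U.map_preimage, hg]
end

section
/- Let K be a locally finitely presentable category, M its class of pure monomorphisms, and M^□ the class of morphisms having the right lifting property with respect to every morphism in M. Then (M, M^□) is a weak factorization system if and only if K has enough pure injectives. -/
open CategoryTheory Limits Opposite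

universe w v u u₂

namespace PureGen

open CategoryTheory Limits

/-- The class of morphisms with the right lifting property with respect to every
morphism in `W`. -/
def rlpOf {D : Type u} [Category.{v} D] (W : MorphismProperty D) : MorphismProperty D :=
  fun _ _ g => ∀ ⦃A B : D⦄ (f : A ⟶ B), W f → HasLiftingProperty f g

/-- The class of morphisms with the left lifting property with respect to every
morphism in `W`. -/
def llpOf {D : Type u} [Category.{v} D] (W : MorphismProperty D) : MorphismProperty D :=
  fun _ _ f => ∀ ⦃A B : D⦄ (g : A ⟶ B), W g → HasLiftingProperty f g

/-- `(L, R)` is a weak factorization system: every morphism factors as a morphism in `L`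
followed by a morphism in `R`, `L` is exactly the class with the left lifting property
with respect to `R`, and `R` is exactly the class with the right lifting property with
respect to `L`. -/
def IsWeakFactorizationSystem {D : Type u} [Category.{v} D]
    (L R : MorphismProperty D) : Prop :=
  (∀ ⦃X Y : D⦄ (f : X ⟶ Y), ∃ (Z : D) (l : X ⟶ Z) (r : Z ⟶ Y), L l ∧ R r ∧ l ≫ r = f) ∧
  (∀ ⦃X Y : D⦄ (f : X ⟶ Y), L f ↔ llpOf R f) ∧
  (∀ ⦃X Y : D⦄ (g : X ⟶ Y), R g ↔ rlpOf L g)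

end PureGen


namespace PureGenAux

open PureGen CategoryTheory Limits Opposite


variable {C : Type u} [Category.{v} C] [HasColimits C]
variable {ι : Type v} (A : ι → C) {κ : Type v} (X : κ → C)

def SigN (P : C) (p : ∀ k, P ⟶ X k) : Type v :=
  Σ i : ι, {uv : (A i ⟶ P) × (A i ⟶ P) // ∀ k, uv.1 ≫ p k = uv.2 ≫ p k}

section Step
variable (P : C) (p : ∀ k, P ⟶ X k)

noncomputable def stepObj : C :=
  coequalizer (Sigma.desc (fun s : SigN A X P p => s.2.1.1))
    (Sigma.desc (fun s : SigN A X P p => s.2.1.2))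

noncomputable def stepπ : P ⟶ stepObj A X P p := coequalizer.π _ _

noncomputable def stepProj (k : κ) : stepObj A X P p ⟶ X k :=
  coequalizer.desc (p k) (by
    apply Sigma.hom_ext
    intro s
    simp only [← Category.assoc, Sigma.ι_desc]
    exact s.2.2 k)

lemma stepπ_proj (k : κ) : stepπ A X P p ≫ stepProj A X P p k = p k :=
  coequalizer.π_desc _ _

lemma step_coeq {i : ι} (u v : A i ⟶ P) (h : ∀ k, u ≫ p k = v ≫ p k) :
    u ≫ stepπ A X P p = v ≫ stepπ A X P p := by
  have hc := coequalizer.condition (Sigma.desc (fun s : SigN A X P p => s.2.1.1))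
      (Sigma.desc (fun s : SigN A X P p => s.2.1.2))
  have h1 := Sigma.ι (fun s : SigN A X P p => A s.1) ⟨i, (u, v), h⟩ ≫= hc
  simp only [← Category.assoc] at h1
  erw [Sigma.ι_desc, Sigma.ι_desc] at h1
  exact h1

end Step

noncomputable def stage : ℕ → (P : C) × (∀ k, P ⟶ X k)
  | 0 => ⟨∐ (fun s : Σ i : ι, ∀ k, A i ⟶ X k => A s.1), fun k => Sigma.desc (fun s => s.2 k)⟩
  | n + 1 => ⟨stepObj A X (stage n).1 (stage n).2, stepProj A X (stage n).1 (stage n).2⟩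

noncomputable def stageMap (n : ℕ) : (stage A X n).1 ⟶ (stage A X (n + 1)).1 :=
  stepπ A X (stage A X n).1 (stage A X n).2

noncomputable def chain : ℕ ⥤ C := Functor.ofSequence (stageMap A X)

structure NatV : Type v where
  down : ℕ

instance : Preorder NatV.{v} := Preorder.lift NatV.down
instance : Nonempty NatV.{v} := ⟨⟨0⟩⟩
instance : IsDirected NatV.{v} (· ≤ ·) :=
  ⟨fun a b => ⟨⟨max a.down b.down⟩, show a.down ≤ max a.down b.down from le_max_left _ _,
    show b.down ≤ max a.down b.down from le_max_right _ _⟩⟩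

def natVFunctor : NatV.{v} ⥤ ℕ where
  obj := NatV.down
  map {a b} f := homOfLE (by have h := leOfHom f; exact h)

noncomputable def chainU : NatV.{v} ⥤ C := natVFunctor.{v} ⋙ chain A X

noncomputable def Pinf : C := colimit (chainU A X)

noncomputable def toPinf (n : ℕ) : (stage A X n).1 ⟶ Pinf A X :=
  colimit.ι (chainU A X) ⟨n⟩

lemma chain_map_succ (n : ℕ) :
    (chain A X).map (homOfLE (Nat.le_add_right n 1)) = stageMap A X n :=
  Functor.ofSequence_map_homOfLE_succ _ n

lemma stage_map_proj {n m : ℕ} (h : n ≤ m) (k : κ) :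
    (chain A X).map (homOfLE h) ≫ (stage A X m).2 k = (stage A X n).2 k := by
  induction m, h using Nat.le_induction with
  | base =>
    rw [show (homOfLE (le_refl n) : (n : ℕ) ⟶ n) = 𝟙 n from rfl,
      CategoryTheory.Functor.map_id]
    erw [Category.id_comp]
  | succ m hm ih =>
    erw [show (homOfLE (Nat.le_succ_of_le hm) : (n : ℕ) ⟶ (m + 1)) =
        homOfLE hm ≫ homOfLE (Nat.le_add_right m 1) from rfl,
      Functor.map_comp, Category.assoc, chain_map_succ]
    have h2 : stageMap A X m ≫ (stage A X (m + 1)).2 k = (stage A X m).2 k :=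
      stepπ_proj A X (stage A X m).1 (stage A X m).2 k
    erw [h2]
    exact ih

lemma stageU_map_proj {a b : NatV.{v}} (h : a ≤ b) (k : κ) :
    (chainU A X).map (homOfLE h) ≫ (stage A X b.down).2 k = (stage A X a.down).2 k :=
  stage_map_proj A X h k

lemma mapU_toPinf {a b : NatV.{v}} (h : a ≤ b) :
    (chainU A X).map (homOfLE h) ≫ toPinf A X b.down = toPinf A X a.down :=
  colimit.w (chainU A X) (homOfLE h)

lemma stageMap_toPinf (n : ℕ) :
    stageMap A X n ≫ toPinf A X (n + 1) = toPinf A X n := by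
  have e1 : (chainU A X).map (homOfLE (show (⟨n⟩ : NatV.{v}) ≤ ⟨n + 1⟩ from
      Nat.le_add_right n 1)) = stageMap A X n :=
    Functor.ofSequence_map_homOfLE_succ (stageMap A X) n
  rw [← e1]
  exact mapU_toPinf A X _

noncomputable def projCocone (k : κ) : Cocone (chainU A X) where
  pt := X k
  ι :=
    { app := fun n => (stage A X n.down).2 k
      naturality := fun a b f => by
        dsimp
        erw [Category.comp_id]
        exact stageU_map_proj A X (leOfHom f) k }

noncomputable def projInf (k : κ) : Pinf A X ⟶ X k :=
  colimit.desc _ (projCocone A X k)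

lemma toPinf_projInf (n : ℕ) (k : κ) :
    toPinf A X n ≫ projInf A X k = (stage A X n).2 k :=
  colimit.ι_desc _ _

lemma mapN_toPinf {n m : ℕ} (h : n ≤ m) :
    (chainU A X).map (homOfLE (show (⟨n⟩ : NatV.{v}) ≤ ⟨m⟩ from h)) ≫ toPinf A X m =
      toPinf A X n :=
  colimit.w (chainU A X) _

lemma existsLift_gen (i : ι) (f : ∀ k, A i ⟶ X k) :
    ∃ g : A i ⟶ Pinf A X, ∀ k, g ≫ projInf A X k = f k := by
  refine ⟨Sigma.ι (fun s : Σ i : ι, ∀ k, A i ⟶ X k => A s.1) ⟨i, f⟩ ≫ toPinf A X 0,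
    fun k => ?_⟩
  erw [Category.assoc, toPinf_projInf]
  exact Sigma.ι_desc _ _

lemma homext_gen (hA : ∀ i : ι, IsFinitelyPresentableObj.{v} (A i)) (i : ι)
    {g g' : A i ⟶ Pinf A X} (h : ∀ k, g ≫ projInf A X k = g' ≫ projInf A X k) :
    g = g' := by
  haveI := hA i NatV.{v} inferInstance inferInstance inferInstance
  have hc : IsColimit ((coyoneda.obj (op (A i))).mapCocone (colimit.cocone (chainU A X))) :=
    isColimitOfPreserves _ (colimit.isColimit _)
  obtain ⟨a, ga, hga⟩ := Types.jointly_surjective_of_isColimit hc g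
  obtain ⟨b, gb, hgb⟩ := Types.jointly_surjective_of_isColimit hc g'
  obtain ⟨na⟩ := a
  obtain ⟨nb⟩ := b
  replace hga : ga ≫ toPinf A X na = g := hga
  replace hgb : gb ≫ toPinf A X nb = g' := hgb
  have e1 : (ga ≫ (chainU A X).map (homOfLE (show (⟨na⟩ : NatV.{v}) ≤ ⟨na ⊔ nb⟩ from
      (le_sup_left : na ≤ na ⊔ nb)))) ≫ toPinf A X (na ⊔ nb) = g := by
    erw [Category.assoc, mapN_toPinf A X (le_sup_left : na ≤ na ⊔ nb)]
    exact hga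
  have e2 : (gb ≫ (chainU A X).map (homOfLE (show (⟨nb⟩ : NatV.{v}) ≤ ⟨na ⊔ nb⟩ from
      (le_sup_right : nb ≤ na ⊔ nb)))) ≫ toPinf A X (na ⊔ nb) = g' := by
    erw [Category.assoc, mapN_toPinf A X (le_sup_right : nb ≤ na ⊔ nb)]
    exact hgb
  have key : ∀ k,
      (ga ≫ (chainU A X).map (homOfLE (show (⟨na⟩ : NatV.{v}) ≤ ⟨na ⊔ nb⟩ from
        (le_sup_left : na ≤ na ⊔ nb)))) ≫ (stage A X (na ⊔ nb)).2 k =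
      (gb ≫ (chainU A X).map (homOfLE (show (⟨nb⟩ : NatV.{v}) ≤ ⟨na ⊔ nb⟩ from
        (le_sup_right : nb ≤ na ⊔ nb)))) ≫ (stage A X (na ⊔ nb)).2 k := by
    intro k
    erw [← toPinf_projInf A X (na ⊔ nb) k, ← Category.assoc, ← Category.assoc, e1, e2]
    exact h k
  have hstep :
      ((ga ≫ (chainU A X).map (homOfLE (show (⟨na⟩ : NatV.{v}) ≤ ⟨na ⊔ nb⟩ from
        (le_sup_left : na ≤ na ⊔ nb)))) ≫ stageMap A X (na ⊔ nb)) =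
      ((gb ≫ (chainU A X).map (homOfLE (show (⟨nb⟩ : NatV.{v}) ≤ ⟨na ⊔ nb⟩ from
        (le_sup_right : nb ≤ na ⊔ nb)))) ≫ stageMap A X (na ⊔ nb)) :=
    step_coeq A X (stage A X (na ⊔ nb)).1 (stage A X (na ⊔ nb)).2 _ _ key
  have hfin : (ga ≫ (chainU A X).map (homOfLE (show (⟨na⟩ : NatV.{v}) ≤ ⟨na ⊔ nb⟩ from
        (le_sup_left : na ≤ na ⊔ nb)))) ≫ toPinf A X (na ⊔ nb) =
      (gb ≫ (chainU A X).map (homOfLE (show (⟨nb⟩ : NatV.{v}) ≤ ⟨na ⊔ nb⟩ from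
        (le_sup_right : nb ≤ na ⊔ nb)))) ≫ toPinf A X (na ⊔ nb) := by
    erw [← stageMap_toPinf A X (na ⊔ nb), ← Category.assoc, ← Category.assoc, hstep]
  rw [← e1, ← e2]
  exact hfin

lemma existsUnique_lift_iso (hA : ∀ i : ι, IsFinitelyPresentableObj.{v} (A i))
    {Y : C} {i : ι} (e : Y ≅ A i) (f : ∀ k, Y ⟶ X k) :
    ∃! g : Y ⟶ Pinf A X, ∀ k, g ≫ projInf A X k = f k := by
  obtain ⟨g, hg⟩ := existsLift_gen A X i (fun k => e.inv ≫ f k)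
  refine ⟨e.hom ≫ g, fun k => by rw [Category.assoc, hg k, e.hom_inv_id_assoc], ?_⟩
  intro y hy
  have h2 := homext_gen A X hA i (g := e.inv ≫ y) (g' := e.inv ≫ (e.hom ≫ g))
    (fun k => by simp [hy k, hg k])
  have h3 : e.hom ≫ (e.inv ≫ y) = e.hom ≫ (e.inv ≫ (e.hom ≫ g)) := by rw [h2]
  simpa using h3

lemma exists_product (hA : ∀ i : ι, IsFinitelyPresentableObj.{v} (A i))
    (hpres : ∀ T : C, ∃ (J : Type v) (_ : Preorder J) (_ : IsDirected J (· ≤ ·))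
      (_ : Nonempty J) (D : J ⥤ C) (c : Cocone D), Nonempty (IsColimit c) ∧ c.pt = T ∧
        ∀ j : J, ∃ i : ι, Nonempty (D.obj j ≅ A i)) :
    ∃ (P : C) (π : ∀ k, P ⟶ X k), ∀ (T : C) (f : ∀ k, T ⟶ X k),
      ∃! g : T ⟶ P, ∀ k, g ≫ π k = f k := by
  refine ⟨Pinf A X, projInf A X, fun T f => ?_⟩
  obtain ⟨J, _, _, _, D, c, ⟨hc⟩, rfl, hiso⟩ := hpres T
  have hDj : ∀ (j : J) (fj : ∀ k, D.obj j ⟶ X k),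
      ∃! g : D.obj j ⟶ Pinf A X, ∀ k, g ≫ projInf A X k = fj k := by
    intro j fj
    obtain ⟨i, ⟨e⟩⟩ := hiso j
    exact existsUnique_lift_iso A X hA e fj
  choose gfun hgfun huniq using fun j => hDj j (fun k => c.ι.app j ≫ f k)
  have hnat : ∀ {j j' : J} (m : j ⟶ j'), D.map m ≫ gfun j' = gfun j := by
    intro j j' m
    apply huniq
    intro k
    rw [Category.assoc, hgfun j' k, ← Category.assoc, c.w m]
  refine ⟨hc.desc ⟨Pinf A X, gfun, fun j j' m =>
      (hnat m).trans (Category.comp_id (gfun j)).symm⟩, fun k => ?_, fun y hy => ?_⟩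
  · apply hc.hom_ext
    intro j
    rw [← Category.assoc, hc.fac]
    exact hgfun j k
  · apply hc.hom_ext
    intro j
    rw [hc.fac]
    exact huniq j (c.ι.app j ≫ y) (fun k => by rw [Category.assoc, hy k])

end PureGenAux

open PureGen CategoryTheory Limits in
/-- Let K be a locally finitely presentable category, M its class of pure monomorphisms
and M^□ the class of morphisms with the right lifting property with respect to every
morphism of M.  Then (M, M^□) is a weak factorization system iff K has enough pure
injectives. -/
theorem wfs_iff_enough_pureInjectives
    (C : Type u) [Category.{v} C] (hC : PureGen.IsLocallyFinitelyPresentable C) :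
    IsWeakFactorizationSystem (pureMonomorphisms C) (rlpOf (pureMonomorphisms C)) ↔
      ∀ X : C, ∃ (Q : C) (h : X ⟶ Q), pureMonomorphisms C h ∧ IsPureInjective Q := by
  obtain ⟨hcol, ι, A, hA, hpres⟩ := hC
  haveI := hcol
  constructor
  · rintro ⟨fac, -, -⟩ X
    obtain ⟨T, πT, hT⟩ := PureGenAux.exists_product A
      (fun k : PEmpty.{v + 1} => PEmpty.elim k) hA hpres
    have uT : ∀ (Y : C) (g g' : Y ⟶ T), g = g' := by
      intro Y g g'
      obtain ⟨w, -, hw⟩ := hT Y (fun k => PEmpty.elim k)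
      rw [hw g (fun k => PEmpty.elim k), hw g' (fun k => PEmpty.elim k)]
    obtain ⟨t0, -, -⟩ := hT X (fun k => PEmpty.elim k)
    obtain ⟨Z, l, r, hl, hr, -⟩ := fac t0
    refine ⟨Z, l, hl, ?_⟩
    intro M N h hp fMZ
    haveI := hr h hp
    obtain ⟨bN, -, -⟩ := hT N (fun k => PEmpty.elim k)
    have sq : CommSq fMZ h r bN := ⟨uT M _ _⟩
    exact ⟨sq.lift, sq.fac_left⟩
  · intro hE
    have fact : ∀ {X Y : C} (f : X ⟶ Y), ∃ (Z : C) (l : X ⟶ Z) (r : Z ⟶ Y),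
        pureMonomorphisms C l ∧ rlpOf (pureMonomorphisms C) r ∧ l ≫ r = f := by
      intro X Y f
      obtain ⟨Q, e, he, hQ⟩ := hE X
      obtain ⟨P, π, hP⟩ := PureGenAux.exists_product A
        (fun b : ULift.{v} Bool => bif b.down then Q else Y) hA hpres
      obtain ⟨l, hl, -⟩ := hP X (fun b =>
        Bool.rec (motive := fun c => X ⟶ (bif c then Q else Y)) f e b.down)
      refine ⟨P, l, π ⟨false⟩, ?_, ?_, hl ⟨false⟩⟩
      · intro M N g u v hM hN hsq
        have hue : u ≫ e = g ≫ (v ≫ π ⟨true⟩) := by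
          have h1 : l ≫ π ⟨true⟩ = e := hl ⟨true⟩
          calc u ≫ e = u ≫ l ≫ π ⟨true⟩ := by rw [h1]
            _ = (u ≫ l) ≫ π ⟨true⟩ := by rw [Category.assoc]
            _ = (g ≫ v) ≫ π ⟨true⟩ := by rw [hsq]
            _ = g ≫ (v ≫ π ⟨true⟩) := by rw [Category.assoc]
        exact he g u (v ≫ π ⟨true⟩) hM hN hue
      · intro M N h hp
        constructor
        intro t b sq
        obtain ⟨w, hwe⟩ := hQ h hp (t ≫ π ⟨true⟩)
        obtain ⟨d, hd, -⟩ := hP N (fun bb =>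
          Bool.rec (motive := fun c => N ⟶ (bif c then Q else Y)) b w bb.down)
        have hcomm : h ≫ d = t := by
          obtain ⟨d', -, hu⟩ := hP M (fun bb => t ≫ π bb)
          have e1 : h ≫ d = d' := by
            apply hu
            intro bb
            obtain ⟨c⟩ := bb
            cases c
            · rw [Category.assoc, hd ⟨false⟩]
              exact sq.w.symm
            · rw [Category.assoc, hd ⟨true⟩]
              exact hwe
          have e2 : t = d' := hu t (fun bb => rfl)
          rw [e1, ← e2]
        exact ⟨⟨⟨d, hcomm, hd ⟨false⟩⟩⟩⟩
    refine ⟨fun X Y f => fact f, ?_, fun X Y g => Iff.rfl⟩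
    intro X Y f
    constructor
    · intro hf M N g hg
      exact hg f hf
    · intro hllp
      obtain ⟨Z, l, r, hl, hr, hlr⟩ := fact f
      haveI := hllp r hr
      have sq : CommSq l f r (𝟙 Y) := ⟨by rw [Category.comp_id, hlr]⟩
      intro M N g u v hM hN husq
      have hul : u ≫ l = g ≫ (v ≫ sq.lift) := by
        calc u ≫ l = u ≫ f ≫ sq.lift := by rw [sq.fac_left]
          _ = (u ≫ f) ≫ sq.lift := by rw [Category.assoc]
          _ = (g ≫ v) ≫ sq.lift := by rw [husq]
          _ = g ≫ (v ≫ sq.lift) := by rw [Category.assoc]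
      obtain ⟨w, hw⟩ := hl g u (v ≫ sq.lift) hM hN hul
      exact ⟨w, hw⟩
end

section
/- Let K be a locally finitely presentable additive category, M its class of pure monomorphisms, and M^□ the class of morphisms having the right lifting property with respect to every morphism in M. Then M^□ consists precisely of the product projections p₁ : A × B → A with B pure injective (up to isomorphism in the arrow category). -/
open CategoryTheory Limits Opposite

universe w v u u₂

namespace PureGen

open CategoryTheory Limits

lemma pure_of_split {C : Type u} [Category.{v} C] {K L : C} (h : K ⟶ L) (r : L ⟶ K)
    (hr : h ≫ r = 𝟙 K) : pureMonomorphisms C h := by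
  intro M N f u v _ _ hsq
  refine ⟨v ≫ r, ?_⟩
  rw [← Category.assoc, ← hsq, Category.assoc, hr, Category.comp_id]

end PureGen

open PureGen CategoryTheory Limits in
/-- In a locally finitely presentable additive category, the class M^□ of morphisms with
the right lifting property with respect to all pure monomorphisms consists exactly of
the product projections p₁ : A × B → A with B pure injective. -/
theorem rlp_pureMonos_eq_projections
    (C : Type u) [Category.{v} C] [Preadditive C] [HasFiniteBiproducts C]
    (hC : PureGen.IsLocallyFinitelyPresentable C) :
    ∀ ⦃X A : C⦄ (g : X ⟶ A),
      rlpOf (pureMonomorphisms C) g ↔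
        ∃ (B : C) (p : X ⟶ B), IsPureInjective B ∧
          Nonempty (IsLimit (BinaryFan.mk g p)) := by
  intro X A g
  constructor
  · intro hg
    obtain ⟨hcolim, -⟩ := hC
    haveI := hcolim
    haveI : HasBinaryBiproducts C := hasBinaryBiproducts_of_finite_biproducts C
    -- `g` has a section `s`
    have hlp : HasLiftingProperty (biprod.lift (𝟙 X) g) g :=
      hg _ (pure_of_split _ biprod.fst (by simp))
    have sq : CommSq (𝟙 X) (biprod.lift (𝟙 X) g) g biprod.snd := ⟨by simp⟩
    obtain ⟨⟨⟨l, hl1, hl2⟩⟩⟩ := hlp.sq_hasLift sq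
    set s : A ⟶ X := biprod.inr ≫ l with hs_def
    have hsg : s ≫ g = 𝟙 A := by
      rw [hs_def, Category.assoc, hl2, biprod.inr_snd]
    -- split the idempotent `e = 𝟙 X - g ≫ s`
    set e : X ⟶ X := 𝟙 X - g ≫ s with he_def
    have heg : e ≫ g = 0 := by
      rw [he_def, Preadditive.sub_comp, Category.id_comp, Category.assoc, hsg,
        Category.comp_id, sub_self]
    have hse : s ≫ e = 0 := by
      rw [he_def, Preadditive.comp_sub, Category.comp_id, ← Category.assoc, hsg,
        Category.id_comp, sub_self]
    have hee : e ≫ e = e := by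
      rw [he_def]
      simp only [Preadditive.sub_comp, Preadditive.comp_sub, Category.id_comp,
        Category.comp_id]
      rw [Category.assoc, ← Category.assoc s g, hsg, Category.id_comp]
      abel
    set B := coequalizer e (𝟙 X) with hB_def
    set π : X ⟶ B := coequalizer.π e (𝟙 X) with hpi_def
    set ι : B ⟶ X := coequalizer.desc e (by rw [Category.id_comp, hee]) with hiota_def
    have hπι : π ≫ ι = e := coequalizer.π_desc _ _
    have hιπ : ι ≫ π = 𝟙 B := by
      apply coequalizer.hom_ext
      rw [← Category.assoc, ← hpi_def, hπι, Category.comp_id]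
      exact (coequalizer.condition e (𝟙 X)).trans (Category.id_comp _)
    haveI : Mono ι := ⟨fun a b hab => by
      have := hab =≫ π
      simpa only [Category.assoc, hιπ, Category.comp_id] using this⟩
    have hιg : ι ≫ g = 0 := by
      have : π ≫ ι ≫ g = π ≫ 0 := by
        rw [← Category.assoc, hπι, heg, Limits.comp_zero]
      exact (cancel_epi π).mp this
    have hsπ : s ≫ π = 0 := by
      have : (s ≫ π) ≫ ι = 0 ≫ ι := by
        rw [Category.assoc, hπι, hse, Limits.zero_comp]
      exact (cancel_mono ι).mp this
    refine ⟨B, π, ?_, ⟨?_⟩⟩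
    · -- B is pure injective
      intro M N h hp f
      have hlp' : HasLiftingProperty h g := hg h hp
      have sq' : CommSq (f ≫ ι) h g (0 : N ⟶ A) := ⟨by
        rw [Category.assoc, hιg, Limits.comp_zero, Limits.comp_zero]⟩
      obtain ⟨⟨⟨l', hl'1, _⟩⟩⟩ := hlp'.sq_hasLift sq'
      exact ⟨l' ≫ π, by rw [← Category.assoc, hl'1, Category.assoc, hιπ,
        Category.comp_id]⟩
    · -- `(g, π)` exhibits X as the product A × B
      have hid : g ≫ s + π ≫ ι = 𝟙 X := by
        rw [hπι, he_def]; abel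
      refine BinaryFan.IsLimit.mk _ (fun {T} a b => a ≫ s + b ≫ ι) ?_ ?_ ?_
      · intro T a b
        simp only [BinaryFan.mk_fst, Preadditive.add_comp, Category.assoc, hsg, hιg,
          Category.comp_id, Limits.comp_zero, add_zero]
        have : (a ≫ s + b ≫ ι) ≫ g = a := by
          rw [Preadditive.add_comp, Category.assoc a s g, Category.assoc b ι g, hsg, hιg,
            Category.comp_id, Limits.comp_zero, add_zero]
        exact this
      · intro T a b
        simp only [BinaryFan.mk_snd, Preadditive.add_comp, Category.assoc, hsπ, hιπ,
          Category.comp_id, Limits.comp_zero, zero_add]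
        have : (a ≫ s + b ≫ ι) ≫ π = b := by
          rw [Preadditive.add_comp, Category.assoc a s π, Category.assoc b ι π, hsπ, hιπ,
            Category.comp_id, Limits.comp_zero, zero_add]
        exact this
      · intro T a b m hm1 hm2
        simp only [BinaryFan.mk_fst] at hm1
        simp only [BinaryFan.mk_snd] at hm2
        calc m = m ≫ 𝟙 X := (Category.comp_id m).symm
          _ = m ≫ (g ≫ s + π ≫ ι) := by rw [hid]
          _ = a ≫ s + b ≫ ι := by
              rw [Preadditive.comp_add]
              simp only [← Category.assoc, hm1, hm2]
              have : (m ≫ g) ≫ s + (m ≫ π) ≫ ι = a ≫ s + b ≫ ι := by rw [← hm1, ← hm2]; rfl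
              exact this
  · rintro ⟨B, p, hB, ⟨hl⟩⟩
    intro M N h hp
    refine ⟨fun {u v} sq => ?_⟩
    obtain ⟨q, hq⟩ := hB h hp (u ≫ p)
    refine ⟨⟨⟨hl.lift (BinaryFan.mk v q), ?_, ?_⟩⟩⟩
    · apply BinaryFan.IsLimit.hom_ext hl
      · rw [Category.assoc]
        have h1 : hl.lift (BinaryFan.mk v q) ≫ (BinaryFan.mk g p).fst = v :=
          hl.fac (BinaryFan.mk v q) ⟨WalkingPair.left⟩
        simp only [BinaryFan.mk_fst] at h1 ⊢
        rw [h1]; exact sq.w.symm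
      · rw [Category.assoc]
        have h2 : hl.lift (BinaryFan.mk v q) ≫ (BinaryFan.mk g p).snd = q :=
          hl.fac (BinaryFan.mk v q) ⟨WalkingPair.right⟩
        simp only [BinaryFan.mk_snd] at h2 ⊢
        rw [h2]; exact hq
    · have h1 : hl.lift (BinaryFan.mk v q) ≫ (BinaryFan.mk g p).fst = v :=
        hl.fac (BinaryFan.mk v q) ⟨WalkingPair.left⟩
      simpa using h1
end

section
/- The category of abelian groups does not have pure effective unions: there exist pure monomorphisms f: A → C and g: B → C, with pullback D of f and g and pushout E of the induced span D → A, D → B, such that the induced morphism h: E → C is not a pure monomorphism. Concretely, one may take C to be the subgroup of ℚ × ℚ generated by (1,0), (0,1), (1/2,1/2), A = ℤ × 0, B = 0 × ℤ, D = 0, E = ℤ ⊕ ℤ. -/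
open CategoryTheory Limits Opposite

namespace PureGen

universe w v u

variable {C : Type u} [Category.{v} C]

/-- The subgroup of `ℚ × ℚ` generated by `(1,0)`, `(0,1)` and `(1/2, 1/2)`. -/
noncomputable def G : AddSubgroup (ℚ × ℚ) :=
  AddSubgroup.closure {((1 : ℚ), (0 : ℚ)), ((0 : ℚ), (1 : ℚ)), ((1/2 : ℚ), (1/2 : ℚ))}

/-- The subgroup `ℤ × ℤ` of `ℚ × ℚ`, generated by `(1,0)` and `(0,1)`. -/
noncomputable def H : AddSubgroup (ℚ × ℚ) :=
  AddSubgroup.closure {((1 : ℚ), (0 : ℚ)), ((0 : ℚ), (1 : ℚ))}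

end PureGen

namespace AbNPE

open PureGen

noncomputable section

/-- split monos are pure -/
lemma pure_of_split {K L : AddCommGrpCat.{0}} (h : K ⟶ L) (r : L ⟶ K)
    (hr : h ≫ r = 𝟙 K) : pureMonomorphisms AddCommGrpCat.{0} h := by
  intro M N f u v _ _ w
  exact ⟨v ≫ r, by rw [← Category.assoc, ← w, Category.assoc, hr, Category.comp_id]⟩

def uu : ℚ × ℚ := ((1 : ℚ), (0 : ℚ))
def vv : ℚ × ℚ := ((0 : ℚ), (1 : ℚ))
def ee : ℚ × ℚ := ((1/2 : ℚ), (1/2 : ℚ))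

lemma uu_mem : uu ∈ G := AddSubgroup.subset_closure (by simp [uu])
lemma vv_mem : vv ∈ G := AddSubgroup.subset_closure (by simp [vv])
lemma ee_mem : ee ∈ G := AddSubgroup.subset_closure (by simp [ee])

abbrev SA : AddSubgroup (ℚ × ℚ) := AddSubgroup.closure {((1 : ℚ), (0 : ℚ))}
abbrev SB : AddSubgroup (ℚ × ℚ) := AddSubgroup.closure {((0 : ℚ), (1 : ℚ))}

def a0 : ↥SA := ⟨uu, AddSubgroup.subset_closure rfl⟩
def b0 : ↥SB := ⟨vv, AddSubgroup.subset_closure rfl⟩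

/-- `ℤ ≃+ SA`, `n ↦ n • (1,0)` -/
def eA : ℤ ≃+ ↥SA :=
  AddEquiv.ofBijective (zmultiplesHom _ a0) (by
    constructor
    · intro m n hmn
      have h2 : m • uu = n • uu := by
        have := congrArg Subtype.val hmn
        simpa [AddSubgroup.coe_zsmul, a0] using this
      have := congrArg Prod.fst h2
      simpa [uu, zsmul_eq_mul] using this
    · intro x
      obtain ⟨n, hn⟩ := AddSubgroup.mem_closure_singleton.mp x.2
      exact ⟨n, Subtype.ext (by simpa [AddSubgroup.coe_zsmul, a0, uu] using hn)⟩)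

def eB : ℤ ≃+ ↥SB :=
  AddEquiv.ofBijective (zmultiplesHom _ b0) (by
    constructor
    · intro m n hmn
      have h2 : m • vv = n • vv := by
        have := congrArg Subtype.val hmn
        simpa [AddSubgroup.coe_zsmul, b0] using this
      have := congrArg Prod.snd h2
      simpa [vv, zsmul_eq_mul] using this
    · intro x
      obtain ⟨n, hn⟩ := AddSubgroup.mem_closure_singleton.mp x.2
      exact ⟨n, Subtype.ext (by simpa [AddSubgroup.coe_zsmul, b0, vv] using hn)⟩)

lemma eA_coe (n : ℤ) : ((eA n : ↥SA) : ℚ × ℚ) = ((n : ℚ), 0) := by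
  show ((n • a0 : ↥SA) : ℚ × ℚ) = _
  simp [AddSubgroup.coe_zsmul, a0, uu, zsmul_eq_mul, Prod.ext_iff]

lemma eB_coe (n : ℤ) : ((eB n : ↥SB) : ℚ × ℚ) = (0, (n : ℚ)) := by
  show ((n • b0 : ↥SB) : ℚ × ℚ) = _
  simp [AddSubgroup.coe_zsmul, b0, vv, zsmul_eq_mul, Prod.ext_iff]

/-- the raw map `ℤ × ℤ → ℚ × ℚ`, `(m,n) ↦ m•(1,0) + n•(1/2,1/2)` -/
def φ : ℤ × ℤ →+ ℚ × ℚ :=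
  AddMonoidHom.mk' (fun p => ((p.1 : ℚ) + (p.2 : ℚ)/2, (p.2 : ℚ)/2)) (by
    intro a b
    simp only [Prod.fst_add, Prod.snd_add, Prod.mk_add_mk, Prod.ext_iff]
    constructor <;> push_cast <;> ring)

lemma φ_mem (p : ℤ × ℤ) : φ p ∈ G := by
  have h : φ p = p.1 • uu + p.2 • ee := by
    simp [φ, uu, ee, Prod.ext_iff, zsmul_eq_mul, AddMonoidHom.mk'_apply, div_eq_mul_inv]
  rw [h]
  exact add_mem (AddSubgroup.zsmul_mem _ uu_mem _) (AddSubgroup.zsmul_mem _ ee_mem _)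

def φG : ℤ × ℤ →+ ↥G := φ.codRestrict G φ_mem

/-- `ℤ × ℤ ≃+ G` -/
def eG : ℤ × ℤ ≃+ ↥G :=
  AddEquiv.ofBijective φG (by
    constructor
    · intro p q hpq
      have h2 : φ p = φ q := congrArg Subtype.val hpq
      have h1 := congrArg Prod.fst h2
      have h2' := congrArg Prod.snd h2
      simp only [φ, AddMonoidHom.mk'_apply] at h1 h2'
      have hb : p.2 = q.2 := by
        have : (p.2 : ℚ) = q.2 := by field_simp at h2'; exact_mod_cast h2'
        exact_mod_cast this
      have ha : p.1 = q.1 := by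
        rw [hb] at h1
        have : (p.1 : ℚ) = q.1 := by linarith
        exact_mod_cast this
      exact Prod.ext ha hb
    · intro x
      have key : ∀ z (_ : z ∈ G), ∃ p : ℤ × ℤ, φ p = z := by
        intro z hz
        refine AddSubgroup.closure_induction (p := fun z _ => ∃ p : ℤ × ℤ, φ p = z)
          ?_ ⟨0, map_zero φ⟩ ?_ ?_ hz
        · intro y hy
          simp only [Set.mem_insert_iff, Set.mem_singleton_iff] at hy
          rcases hy with rfl | rfl | rfl
          · exact ⟨(1, 0), by simp [φ, Prod.ext_iff]⟩
          · exact ⟨(-1, 2), by simp [φ, Prod.ext_iff]⟩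
          · exact ⟨(0, 1), by simp [φ, Prod.ext_iff]⟩
        · rintro y z _ _ ⟨p, rfl⟩ ⟨q, rfl⟩
          exact ⟨p + q, map_add φ p q⟩
        · rintro y _ ⟨p, rfl⟩
          exact ⟨-p, map_neg φ p⟩
      obtain ⟨p, hp⟩ := key x x.2
      exact ⟨p, Subtype.ext hp⟩)

lemma eG_coe (p : ℤ × ℤ) : ((eG p : ↥G) : ℚ × ℚ) = ((p.1 : ℚ) + (p.2 : ℚ)/2, (p.2 : ℚ)/2) :=
  rfl

lemma SA_le : SA ≤ G := by
  rw [AddSubgroup.closure_le]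
  intro x hx
  rcases hx with rfl
  exact uu_mem

lemma SB_le : SB ≤ G := by
  rw [AddSubgroup.closure_le]
  intro x hx
  rcases hx with rfl
  exact vv_mem

def fhom : ↥SA →+ ↥G := AddSubgroup.inclusion SA_le
def ghom : ↥SB →+ ↥G := AddSubgroup.inclusion SB_le

def ψ : ℤ × ℤ →+ ℚ × ℚ :=
  AddMonoidHom.mk' (fun p => ((p.1 : ℚ), (p.2 : ℚ))) (by
    intro a b
    simp only [Prod.fst_add, Prod.snd_add, Prod.mk_add_mk, Prod.ext_iff]
    constructor <;> push_cast <;> ring)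

lemma ψ_mem (p : ℤ × ℤ) : ψ p ∈ G := by
  have h : ψ p = p.1 • uu + p.2 • vv := by
    simp [ψ, uu, vv, Prod.ext_iff, zsmul_eq_mul, AddMonoidHom.mk'_apply]
  rw [h]
  exact add_mem (AddSubgroup.zsmul_mem _ uu_mem _) (AddSubgroup.zsmul_mem _ vv_mem _)

def hhom : ℤ × ℤ →+ ↥G := ψ.codRestrict G ψ_mem

def iAhom : ↥SA →+ ℤ × ℤ := (AddMonoidHom.inl ℤ ℤ).comp eA.symm.toAddMonoidHom
def iBhom : ↥SB →+ ℤ × ℤ := (AddMonoidHom.inr ℤ ℤ).comp eB.symm.toAddMonoidHom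

lemma iAhom_eA (n : ℤ) : iAhom (eA n) = (n, 0) := by
  simp [iAhom]

lemma iBhom_eB (n : ℤ) : iBhom (eB n) = (0, n) := by
  simp [iBhom]

def rFhom : ↥G →+ ↥SA :=
  eA.toAddMonoidHom.comp ((AddMonoidHom.fst ℤ ℤ).comp eG.symm.toAddMonoidHom)

def rGhom : ↥G →+ ↥SB :=
  eB.toAddMonoidHom.comp
    (((AddMonoidHom.fst ℤ ℤ) + (AddMonoidHom.snd ℤ ℤ)).comp eG.symm.toAddMonoidHom)

lemma eG_symm_f (n : ℤ) : eG.symm (fhom (eA n)) = (n, 0) := by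
  apply eG.injective
  rw [AddEquiv.apply_symm_apply]
  apply Subtype.ext
  rw [eG_coe]
  show ((eA n : ↥SA) : ℚ × ℚ) = _
  rw [eA_coe]
  norm_num

lemma eG_symm_g (n : ℤ) : eG.symm (ghom (eB n)) = (-n, 2*n) := by
  apply eG.injective
  rw [AddEquiv.apply_symm_apply]
  apply Subtype.ext
  rw [eG_coe]
  show ((eB n : ↥SB) : ℚ × ℚ) = _
  rw [eB_coe]
  simp [Prod.ext_iff]
  try push_cast
  try ring

lemma rF_f (x : ↥SA) : rFhom (fhom x) = x := by
  obtain ⟨n, rfl⟩ := eA.surjective x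
  simp [rFhom, eG_symm_f n]

lemma rG_g (x : ↥SB) : rGhom (ghom x) = x := by
  obtain ⟨n, rfl⟩ := eB.surjective x
  show eB (((AddMonoidHom.fst ℤ ℤ) + (AddMonoidHom.snd ℤ ℤ)) (eG.symm (ghom (eB n)))) = eB n
  rw [eG_symm_g n]
  congr 1
  simp
  omega

lemma h_iA (x : ↥SA) : hhom (iAhom x) = fhom x := by
  obtain ⟨n, rfl⟩ := eA.surjective x
  rw [iAhom_eA]
  apply Subtype.ext
  show ψ (n, 0) = ((eA n : ↥SA) : ℚ × ℚ)
  rw [eA_coe]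
  try simp [ψ, AddMonoidHom.mk'_apply, Prod.ext_iff]

lemma h_iB (x : ↥SB) : hhom (iBhom x) = ghom x := by
  obtain ⟨n, rfl⟩ := eB.surjective x
  rw [iBhom_eB]
  apply Subtype.ext
  show ψ (0, n) = ((eB n : ↥SB) : ℚ × ℚ)
  rw [eB_coe]
  try simp [ψ, AddMonoidHom.mk'_apply, Prod.ext_iff]

/-- `ℤ` is finitely presentable. -/
lemma fp_int : IsFinitelyPresentableObj.{0} (AddCommGrpCat.of ℤ) := by
  intro J pJ dJ nJ
  letI : Preorder J := pJ
  haveI : IsDirected J (· ≤ ·) := dJ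
  haveI : Nonempty J := nJ
  haveI : IsFiltered J := inferInstance
  have i : (forget AddCommGrpCat.{0}) ≅ coyoneda.obj (op (AddCommGrpCat.of ℤ)) := by
    refine NatIso.ofComponents (fun X => ((zmultiplesHom X).trans (ConcreteCategory.homEquiv (X := AddCommGrpCat.of ℤ) (Y := X)).symm).toIso) ?_
    intro X Y φ
    refine ConcreteCategory.hom_ext _ _ fun x => ?_
    apply AddCommGrpCat.int_hom_ext
    show (1 : ℤ) • (φ x) = φ ((1 : ℤ) • x)
    rw [one_zsmul, one_zsmul]
  haveI : PreservesColimitsOfShape J (forget AddCommGrpCat.{0}) := inferInstance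
  exact preservesColimitsOfShape_of_natIso i

lemma homD_eq {X : AddCommGrpCat.{0}} (f g : AddCommGrpCat.of PUnit ⟶ X) : f = g := by
  ext x
  have hx : x = 0 := Subsingleton.elim _ _
  rw [hx, map_zero, map_zero]

lemma homToD_eq {X : AddCommGrpCat.{0}} (f g : X ⟶ AddCommGrpCat.of PUnit) : f = g :=
  AddCommGrpCat.ext fun _ => Subsingleton.elim _ _

lemma interAB {a : ↥SA} {b : ↥SB} (hab : (a : ℚ × ℚ) = (b : ℚ × ℚ)) : a = 0 ∧ b = 0 := by
  obtain ⟨n, hn⟩ := AddSubgroup.mem_closure_singleton.mp a.2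
  obtain ⟨m, hm⟩ := AddSubgroup.mem_closure_singleton.mp b.2
  have h1 : (n : ℚ) = 0 := by
    have := congrArg Prod.snd hm
    have h2 := congrArg Prod.fst hn
    have h3 := congrArg Prod.fst hm
    rw [hab] at h2
    rw [← h3] at h2
    simpa [zsmul_eq_mul] using h2
  have ha : (a : ℚ × ℚ) = 0 := by
    rw [← hn]
    have := congrArg Prod.snd hn
    ext
    · simpa [zsmul_eq_mul] using h1
    · simp [zsmul_eq_mul]
  have hb : (b : ℚ × ℚ) = 0 := by rw [← hab]; exact ha
  exact ⟨Subtype.ext ha, Subtype.ext hb⟩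

lemma pb_zero {X : AddCommGrpCat.{0}} (a : X ⟶ AddCommGrpCat.of ↥SA) (b : X ⟶ AddCommGrpCat.of ↥SB)
    (hc : a ≫ AddCommGrpCat.ofHom fhom = b ≫ AddCommGrpCat.ofHom ghom) : a = 0 ∧ b = 0 := by
  have key : ∀ x, a x = 0 ∧ b x = 0 := by
    intro x
    have hx : fhom (a x) = ghom (b x) := by
      have := congrArg (fun k => k x) hc
      simpa using this
    have hval := congrArg Subtype.val hx
    simp only [fhom, ghom, AddSubgroup.coe_inclusion] at hval
    exact interAB hval
  constructor <;> refine AddCommGrpCat.ext fun x => ?_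
  · simpa using (key x).1
  · simpa using (key x).2

lemma main :
    ∃ (f : AddCommGrpCat.of ↥SA ⟶ AddCommGrpCat.of ↥G) (g : AddCommGrpCat.of ↥SB ⟶ AddCommGrpCat.of ↥G)
      (p : AddCommGrpCat.of PUnit ⟶ AddCommGrpCat.of ↥SA)
      (q : AddCommGrpCat.of PUnit ⟶ AddCommGrpCat.of ↥SB)
      (iA : AddCommGrpCat.of ↥SA ⟶ AddCommGrpCat.of (ℤ × ℤ))
      (iB : AddCommGrpCat.of ↥SB ⟶ AddCommGrpCat.of (ℤ × ℤ))
      (h : AddCommGrpCat.of (ℤ × ℤ) ⟶ AddCommGrpCat.of ↥G),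
      pureMonomorphisms AddCommGrpCat.{0} f ∧
      pureMonomorphisms AddCommGrpCat.{0} g ∧
      IsPullback p q f g ∧
      IsPushout p q iA iB ∧
      iA ≫ h = f ∧ iB ≫ h = g ∧
      ¬ pureMonomorphisms AddCommGrpCat.{0} h := by
  refine ⟨AddCommGrpCat.ofHom fhom, AddCommGrpCat.ofHom ghom, 0, 0,
    AddCommGrpCat.ofHom iAhom, AddCommGrpCat.ofHom iBhom, AddCommGrpCat.ofHom hhom,
    ?_, ?_, ?_, ?_, ?_, ?_, ?_⟩
  · exact pure_of_split _ (AddCommGrpCat.ofHom rFhom)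
      (by refine AddCommGrpCat.ext fun x => ?_; show rFhom (fhom x) = x; exact rF_f x)
  · exact pure_of_split _ (AddCommGrpCat.ofHom rGhom)
      (by refine AddCommGrpCat.ext fun x => ?_; show rGhom (ghom x) = x; exact rG_g x)
  · -- pullback
    refine IsPullback.of_isLimit (c := PullbackCone.mk 0 0 (homD_eq _ _))
      (PullbackCone.IsLimit.mk _ (fun s => 0) ?_ ?_ ?_)
    · intro s
      rw [(pb_zero s.fst s.snd s.condition).1, zero_comp]
    · intro s
      rw [(pb_zero s.fst s.snd s.condition).2, zero_comp]
    · intro s m _ _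
      exact homToD_eq _ _
  · -- pushout
    refine IsPushout.of_isColimit
      (c := PushoutCocone.mk (AddCommGrpCat.ofHom iAhom) (AddCommGrpCat.ofHom iBhom)
        (homD_eq _ _))
      (PushoutCocone.IsColimit.mk _
        (fun s => AddCommGrpCat.ofHom
          ((s.inl.hom.comp eA.toAddMonoidHom).comp (AddMonoidHom.fst ℤ ℤ) +
           (s.inr.hom.comp eB.toAddMonoidHom).comp (AddMonoidHom.snd ℤ ℤ)))
        ?_ ?_ ?_)
    · intro s
      ext x
      obtain ⟨n, rfl⟩ := eA.surjective x
      show (s.inl.hom.comp eA.toAddMonoidHom).comp (AddMonoidHom.fst ℤ ℤ)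
          (iAhom (eA n)) +
        (s.inr.hom.comp eB.toAddMonoidHom).comp (AddMonoidHom.snd ℤ ℤ)
          (iAhom (eA n)) = s.inl (eA n)
      rw [iAhom_eA]
      simp
    · intro s
      ext x
      obtain ⟨n, rfl⟩ := eB.surjective x
      show (s.inl.hom.comp eA.toAddMonoidHom).comp (AddMonoidHom.fst ℤ ℤ)
          (iBhom (eB n)) +
        (s.inr.hom.comp eB.toAddMonoidHom).comp (AddMonoidHom.snd ℤ ℤ)
          (iBhom (eB n)) = s.inr (eB n)
      rw [iBhom_eB]
      simp
    · intro s m hl hr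
      ext ⟨a, b⟩
      have hdecomp : ((a, b) : ℤ × ℤ) = iAhom (eA a) + iBhom (eB b) := by
        rw [iAhom_eA, iBhom_eB]
        simp
      have h1 : m (a, b) = m (iAhom (eA a)) + m (iBhom (eB b)) := by
        rw [← map_add, ← hdecomp]
      have h2 : m (iAhom (eA a)) = s.inl (eA a) := by
        have := congrArg (fun k => k (eA a)) hl
        simpa using this
      have h3 : m (iBhom (eB b)) = s.inr (eB b) := by
        have := congrArg (fun k => k (eB b)) hr
        simpa using this
      rw [h1, h2, h3]
      show _ = (s.inl.hom.comp eA.toAddMonoidHom).comp (AddMonoidHom.fst ℤ ℤ)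
          ((a, b) : ℤ × ℤ) +
        (s.inr.hom.comp eB.toAddMonoidHom).comp (AddMonoidHom.snd ℤ ℤ)
          ((a, b) : ℤ × ℤ)
      simp
  · refine AddCommGrpCat.ext fun x => ?_
    exact h_iA x
  · refine AddCommGrpCat.ext fun x => ?_
    exact h_iB x
  · -- h is not pure
    intro hp
    have comm : AddCommGrpCat.ofHom (zmultiplesHom (ℤ × ℤ) ((1, 1) : ℤ × ℤ)) ≫
        AddCommGrpCat.ofHom hhom =
        AddCommGrpCat.ofHom (zmultiplesHom ℤ 2) ≫
        AddCommGrpCat.ofHom (zmultiplesHom ↥G ⟨ee, ee_mem⟩) := by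
      apply AddCommGrpCat.int_hom_ext
      show hhom ((1 : ℤ) • ((1, 1) : ℤ × ℤ)) = ((1 : ℤ) • (2 : ℤ)) • (⟨ee, ee_mem⟩ : ↥G)
      apply Subtype.ext
      rw [one_zsmul, one_zsmul]
      show ψ (1, 1) = ((((2 : ℤ) • (⟨ee, ee_mem⟩ : ↥G)) : ↥G) : ℚ × ℚ)
      rw [AddSubgroup.coe_zsmul]
      simp [ψ, ee, AddMonoidHom.mk'_apply, Prod.ext_iff, zsmul_eq_mul]
      try norm_num
    obtain ⟨g, hg⟩ := hp (M := AddCommGrpCat.of ℤ) (N := AddCommGrpCat.of ℤ)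
      (AddCommGrpCat.ofHom (zmultiplesHom ℤ 2))
      (AddCommGrpCat.ofHom (zmultiplesHom (ℤ × ℤ) ((1, 1) : ℤ × ℤ)))
      (AddCommGrpCat.ofHom (zmultiplesHom ↥G ⟨ee, ee_mem⟩)) fp_int fp_int comm
    have hg1 : g ((2 : ℤ)) = ((1, 1) : ℤ × ℤ) := by
      have := congrArg (fun k => k (1 : ℤ)) hg
      simpa [zmultiplesHom] using this
    have hg2 : g ((2 : ℤ)) = g ((1 : ℤ)) + g ((1 : ℤ)) := by
      have h12 := AddMonoidHom.map_add g.hom (1 : ℤ) (1 : ℤ)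
      rw [show (1 : ℤ) + 1 = 2 by norm_num] at h12
      exact h12
    have hsum : g ((1 : ℤ)) + g ((1 : ℤ)) = ((1, 1) : ℤ × ℤ) := hg2.symm.trans hg1
    have h2 : (g ((1 : ℤ))).1 + (g ((1 : ℤ))).1 = 1 := congrArg Prod.fst hsum
    omega
end

end AbNPE

open PureGen in
/-- The category of abelian groups does not have pure effective unions: with
`C` the subgroup of `ℚ × ℚ` generated by `(1,0)`, `(0,1)`, `(1/2,1/2)`, `A = ℤ × 0`,
`B = 0 × ℤ`, `D = 0` and `E = ℤ ⊕ ℤ`, there are pure monomorphisms `f : A ⟶ C`,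
`g : B ⟶ C`, a pullback square with vertex `D`, a pushout square with vertex `E`,
such that the induced morphism `h : E ⟶ C` is not a pure monomorphism. -/
theorem Ab_not_pure_effective_unions :
    let Cob : AddCommGrpCat.{0} := AddCommGrpCat.of G
    let A : AddCommGrpCat.{0} := AddCommGrpCat.of (AddSubgroup.closure {((1 : ℚ), (0 : ℚ))})
    let B : AddCommGrpCat.{0} := AddCommGrpCat.of (AddSubgroup.closure {((0 : ℚ), (1 : ℚ))})
    let D : AddCommGrpCat.{0} := AddCommGrpCat.of PUnit
    let E : AddCommGrpCat.{0} := AddCommGrpCat.of (ℤ × ℤ)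
    ∃ (f : A ⟶ Cob) (g : B ⟶ Cob) (p : D ⟶ A) (q : D ⟶ B)
      (iA : A ⟶ E) (iB : B ⟶ E) (h : E ⟶ Cob),
      pureMonomorphisms AddCommGrpCat.{0} f ∧
      pureMonomorphisms AddCommGrpCat.{0} g ∧
      IsPullback p q f g ∧
      IsPushout p q iA iB ∧
      iA ≫ h = f ∧ iB ≫ h = g ∧
      ¬ pureMonomorphisms AddCommGrpCat.{0} h := by
  intro Cob A B D E
  exact AbNPE.main
end

section
/- Let K be a left semi-abelian category (a preabelian category in which the canonical morphism coim(z) → im(z) is a monomorphism for every morphism z). Given a diagram in which f: A → C and g: B → C are regular monomorphisms, the outer square (with vertex D) is a pullback of f and g, and the inner square (with vertex E) is a pushout of the induced span D → A, D → B, the induced morphism h: E → C is a monomorphism. -/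
open CategoryTheory Limits

universe v u

namespace PureGen

variable {C : Type u} [Category.{v} C]

/-- A category has effective unions if, whenever `f : A ⟶ X` and `g : B ⟶ X` are regular
monomorphisms, the outer square (with vertex `D`) is a pullback of `f` and `g`, the inner
square (with vertex `E`) is a pushout of the induced span `D ⟶ A`, `D ⟶ B`, and
`h : E ⟶ X` is the induced morphism, then `h` is a regular monomorphism. -/
def HasEffectiveUnions (C : Type u) [Category.{v} C] : Prop :=
  ∀ ⦃D A B X E : C⦄ (f : A ⟶ X) (g : B ⟶ X) (p : D ⟶ A) (q : D ⟶ B)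
    (iA : A ⟶ E) (iB : B ⟶ E) (h : E ⟶ X),
    Nonempty (RegularMono f) → Nonempty (RegularMono g) →
    IsPullback p q f g → IsPushout p q iA iB →
    iA ≫ h = f → iB ≫ h = g → Nonempty (RegularMono h)

/-- A preabelian category is left semi-abelian if for every morphism `z` the canonical
morphism from the coimage of `z` to the image of `z` is a monomorphism. -/
def IsLeftSemiAbelian (C : Type u) [Category.{v} C] [Preadditive C]
    [HasKernels C] [HasCokernels C] : Prop :=
  ∀ ⦃X Y : C⦄ (z : X ⟶ Y), Mono (Abelian.coimageImageComparison z)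

end PureGen


open PureGen in
/-- In a left semi-abelian category, given regular monomorphisms `f : A ⟶ X` and
`g : B ⟶ X`, a pullback square with vertex `D` and a pushout square with vertex `E`
as in the effective-unions diagram, the induced morphism `h : E ⟶ X` is a monomorphism. -/
theorem mono_induced_of_isLeftSemiAbelian
    (C : Type u) [Category.{v} C] [Preadditive C] [HasFiniteBiproducts C]
    [HasKernels C] [HasCokernels C]
    (hC : IsLeftSemiAbelian C)
    ⦃D A B X E : C⦄ (f : A ⟶ X) (g : B ⟶ X) (p : D ⟶ A) (q : D ⟶ B)
    (iA : A ⟶ E) (iB : B ⟶ E) (h : E ⟶ X)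
    (hf : Nonempty (RegularMono f)) (hg : Nonempty (RegularMono g))
    (hpb : IsPullback p q f g) (hpo : IsPushout p q iA iB)
    (hA : iA ≫ h = f) (hB : iB ≫ h = g) : Mono h := by
  have : HasBinaryBiproducts C := hasBinaryBiproducts_of_finite_biproducts C
  -- The morphism whose coimage is `E`
  set z : A ⊞ B ⟶ X := biprod.desc f (-g) with hz
  set k : D ⟶ A ⊞ B := biprod.lift p q with hkdef
  set e : A ⊞ B ⟶ E := biprod.desc iA (-iB) with hedef
  have hkz : k ≫ z = 0 := by
    simp [hz, hkdef, hpb.w]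
  have hke : k ≫ e = 0 := by
    simp [hedef, hkdef, hpo.w]
  have hez : e ≫ h = z := by
    apply biprod.hom_ext' <;> simp [hz, hedef, hA, hB]
  -- `k` is a kernel of `z`
  have hk : IsLimit (KernelFork.ofι k hkz) := by
    refine KernelFork.IsLimit.ofι _ _
      (fun {W'} x hx => hpb.lift (x ≫ biprod.fst) (x ≫ biprod.snd) ?_)
      (fun {W'} x hx => ?_) (fun {W'} x hx m hm => ?_)
    · have := hx
      simp only [hz, Preadditive.comp_sub, biprod.lift_desc] at this ⊢
      have h2 : x ≫ biprod.desc f (-g) = x ≫ biprod.fst ≫ f - x ≫ biprod.snd ≫ g := by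
        rw [show biprod.desc f (-g) = biprod.fst ≫ f - biprod.snd ≫ g by ext <;> simp]
        simp [Preadditive.comp_sub]
      rw [h2] at hx
      rw [Category.assoc, Category.assoc]
      exact sub_eq_zero.mp hx
    · apply biprod.hom_ext <;> simp [hkdef]
    · apply hpb.hom_ext
      · rw [IsPullback.lift_fst]
        rw [← hm]; simp [hkdef]
      · rw [IsPullback.lift_snd]
        rw [← hm]; simp [hkdef]
  -- `e` is a cokernel of `k`
  have he : IsColimit (CokernelCofork.ofπ e hke) := by
    refine CokernelCofork.IsColimit.ofπ _ _
      (fun {Z'} x hx => hpo.desc (biprod.inl ≫ x) (-(biprod.inr ≫ x)) ?_)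
      (fun {Z'} x hx => ?_) (fun {Z'} x hx m hm => ?_)
    · have h2 : k ≫ x = p ≫ biprod.inl ≫ x + q ≫ biprod.inr ≫ x := by
        rw [show x = biprod.desc (biprod.inl ≫ x) (biprod.inr ≫ x) by ext <;> simp]
        simp [hkdef]
      rw [h2] at hx
      rw [Preadditive.comp_neg]
      linear_combination (norm := abel) hx
    · apply biprod.hom_ext' <;> simp [hedef]
    · apply hpo.hom_ext
      · rw [IsPushout.inl_desc]
        rw [← hm]; simp [hedef]
      · rw [IsPushout.inr_desc]
        rw [← hm]; simp [hedef]
  -- compare `D` with `kernel z`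
  let φ : kernel z ≅ D := IsLimit.conePointUniqueUpToIso (kernelIsKernel z) hk
  have hφ : φ.hom ≫ k = kernel.ι z := by
    simpa using IsLimit.conePointUniqueUpToIso_hom_comp (kernelIsKernel z) hk
      WalkingParallelPair.zero
  -- hence `e` is a cokernel of `kernel.ι z`
  have he' : IsColimit (CokernelCofork.ofπ e
      (show kernel.ι z ≫ e = 0 by rw [← hφ, Category.assoc, hke, comp_zero]) :
      CokernelCofork (kernel.ι z)) :=
    isCokernelEpiComp he φ.hom hφ.symm
  -- compare `E` with the coimage of `z`
  let ψ : Abelian.coimage z ≅ E :=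
    IsColimit.coconePointUniqueUpToIso (cokernelIsCokernel (kernel.ι z)) he'
  have hψ : Abelian.coimage.π z ≫ ψ.hom = e := by
    simpa using IsColimit.comp_coconePointUniqueUpToIso_hom
      (cokernelIsCokernel (kernel.ι z)) he' WalkingParallelPair.one
  -- conclude
  have hcomp : Mono (Abelian.coimageImageComparison z) := hC z
  have hmono : Mono (Abelian.coimageImageComparison z ≫ Abelian.image.ι z) := mono_comp _ _
  have key : ψ.hom ≫ h = Abelian.coimageImageComparison z ≫ Abelian.image.ι z := by
    have : Abelian.coimage.π z ≫ ψ.hom ≫ h =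
        Abelian.coimage.π z ≫ Abelian.coimageImageComparison z ≫ Abelian.image.ι z := by
      rw [Abelian.coimage_image_factorisation, ← Category.assoc, hψ, hez]
    exact (cancel_epi (Abelian.coimage.π z)).mp this
  have hm2 : Mono (ψ.hom ≫ h) := key ▸ hmono
  have : h = ψ.inv ≫ (ψ.hom ≫ h) := by simp
  rw [this]
  exact mono_comp _ _
end

section
/- For any ring R, there is a set X of homomorphisms of (right) R-modules such that an R-module is pure injective if and only if it is injective with respect to every homomorphism in X. -/
open CategoryTheory Limits Opposite

universe w v u u₂

namespace PureGen

open CategoryTheory Limits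

variable (R : Type u) [Ring R]

/-- The class of pure monomorphisms of `R`-modules: `h : K ⟶ L` is pure if every
commutative square over a homomorphism `f : M ⟶ N` of finitely presented `R`-modules
admits a factorization of `u` through `f`. -/
def modulePureMonomorphisms : MorphismProperty (ModuleCat.{u} R) :=
  fun K _L h => ∀ ⦃M N : ModuleCat.{u} R⦄ (f : M ⟶ N) (u : M ⟶ K) (v : N ⟶ _L),
    Module.FinitePresentation R M → Module.FinitePresentation R N →
    u ≫ h = f ≫ v → ∃ g : N ⟶ K, f ≫ g = u

/-- An `R`-module is pure injective if it is injective with respect to all pure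
monomorphisms. -/
def IsPureInjectiveModule (Q : ModuleCat.{u} R) : Prop :=
  ∀ ⦃M N : ModuleCat.{u} R⦄ (h : M ⟶ N), modulePureMonomorphisms R h →
    ∀ f : M ⟶ Q, ∃ g : N ⟶ Q, h ≫ g = f

end PureGen

namespace PureGenAux

open CategoryTheory Cardinal PureGen

set_option linter.unusedSectionVars false
set_option linter.deprecated false

variable {R : Type u} [Ring R]

section Maps

variable {K L : Type u} [AddCommGroup K] [Module R K] [AddCommGroup L] [Module R L]


variable {K L : Type u} [AddCommGroup K] [Module R K] [AddCommGroup L] [Module R L]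

/-- Elementwise purity of a linear map. -/
def EP (h : K →ₗ[R] L) : Prop :=
  ∀ (m n : ℕ) (A : Fin m → Fin n → R) (b : Fin m → K),
    (∃ x : Fin n → L, ∀ i, ∑ j, A i j • x j = h (b i)) →
    ∃ y : Fin n → K, ∀ i, ∑ j, A i j • y j = b i

/-- Elementwise purity with general finite index types. -/
lemma EP.gen {h : K →ₗ[R] L} (hE : EP h) {γ δ : Type*} [Fintype γ] [Fintype δ]
    (A : γ → δ → R) (b : γ → K)
    (hx : ∃ x : δ → L, ∀ i, ∑ j, A i j • x j = h (b i)) :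
    ∃ y : δ → K, ∀ i, ∑ j, A i j • y j = b i := by
  obtain ⟨x, hx⟩ := hx
  classical
  let eγ := Fintype.equivFin γ
  let eδ := Fintype.equivFin δ
  obtain ⟨y, hy⟩ := hE _ _ (fun i j => A (eγ.symm i) (eδ.symm j)) (fun i => b (eγ.symm i))
    ⟨fun j => x (eδ.symm j), fun i => by
      rw [Fintype.sum_equiv eδ.symm _ (fun j => A (eγ.symm i) j • x j) (fun j => rfl)]
      exact hx _⟩
  refine ⟨fun j => y (eδ j), fun i => ?_⟩
  have h2 := hy (eγ i)
  simp only [Equiv.symm_apply_apply] at h2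
  rw [← h2]
  exact Fintype.sum_equiv eδ _ _ (fun j => by simp [eδ])

/-- Descend a linear map along a surjection whose kernel it kills. -/
lemma descend {F N K' : Type u} [AddCommGroup F] [Module R F] [AddCommGroup N] [Module R N]
    [AddCommGroup K'] [Module R K'] (π : F →ₗ[R] N) (hπ : Function.Surjective π)
    (g' : F →ₗ[R] K') (hker : LinearMap.ker π ≤ LinearMap.ker g') :
    ∃ g : N →ₗ[R] K', g ∘ₗ π = g' := by
  refine ⟨(LinearMap.ker π).liftQ g' hker ∘ₗ
    (LinearMap.quotKerEquivOfSurjective π hπ).symm.toLinearMap, ?_⟩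
  ext z
  have : (LinearMap.quotKerEquivOfSurjective π hπ).symm (π z) = Submodule.Quotient.mk z := by
    apply (LinearMap.quotKerEquivOfSurjective π hπ).injective
    simp [LinearMap.quotKerEquivOfSurjective]
  simp [this]

/-- Elementwise purity implies the factorization property against maps of
finitely presented modules. -/
lemma EF {h : K →ₗ[R] L} (hE : EP h) {M N : Type u}
    [AddCommGroup M] [Module R M] [AddCommGroup N] [Module R N]
    (hM : Module.Finite R M) (hN : Module.FinitePresentation R N)
    (f : M →ₗ[R] N) (uu : M →ₗ[R] K) (v : N →ₗ[R] L) (sq : h ∘ₗ uu = v ∘ₗ f) :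
    ∃ g : N →ₗ[R] K, g ∘ₗ f = uu := by
  classical
  obtain ⟨s, hs, ⟨t, ht⟩⟩ := hN
  set π : (↥s →₀ R) →ₗ[R] N := Finsupp.linearCombination R ((↑) : ↥s → N) with hπdef
  have hπ : Function.Surjective π := by
    rw [← LinearMap.range_eq_top, Finsupp.range_linearCombination]
    rw [Subtype.range_coe_subtype, Finset.setOf_mem, hs]
  have pisum : ∀ w : ↥s →₀ R, π w = ∑ j : ↥s, w j • (j : N) := by
    intro w
    rw [hπdef, Finsupp.linearCombination_apply, Finsupp.sum_fintype]
    intro j; exact zero_smul _ _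
  obtain ⟨sM, hsM⟩ := hM
  -- lifts of f on generators
  have hlift : ∀ a : ↥sM, ∃ c : ↥s →₀ R, π c = f a := fun a => hπ (f (a : M))
  choose c hc using hlift
  -- the big system
  set γ := (↥t) ⊕ (↥sM)
  set A : γ → ↥s → R := Sum.elim (fun w j => (w : ↥s →₀ R) j) (fun a j => c a j) with hA
  set b : γ → K := Sum.elim (fun _ => 0) (fun a => uu (a : M)) with hb
  have hker_t : ∀ w : ↥s →₀ R, w ∈ t → π w = 0 := by
    intro w hw
    have : w ∈ LinearMap.ker π := by
      rw [← ht]; exact Submodule.subset_span hw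
    simpa using this
  have hsol : ∀ i : γ, ∑ j : ↥s, A i j • v (j : N) = h (b i) := by
    rintro (⟨w, hw⟩ | ⟨a, ha⟩)
    · have : ∑ j : ↥s, (w : ↥s →₀ R) j • v (j : N) = v (π w) := by
        rw [pisum, map_sum]; simp
      simp only [hA, hb, Sum.elim_inl]
      rw [this, hker_t w hw, map_zero, map_zero]
    · have : ∑ j : ↥s, (c ⟨a, ha⟩) j • v (j : N) = v (π (c ⟨a, ha⟩)) := by
        rw [pisum, map_sum]; simp
      simp only [hA, hb, Sum.elim_inr]
      rw [this, hc]
      exact (LinearMap.congr_fun sq a).symm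
  obtain ⟨y, hy⟩ := hE.gen A b ⟨fun j => v (j : N), hsol⟩
  -- build g
  set g' : (↥s →₀ R) →ₗ[R] K := Finsupp.linearCombination R (fun j : ↥s => y j) with hg'
  have hg'sum : ∀ w : ↥s →₀ R, g' w = ∑ j : ↥s, w j • y j := by
    intro w
    rw [hg', Finsupp.linearCombination_apply, Finsupp.sum_fintype]
    intro j; exact zero_smul _ _
  have hker : LinearMap.ker π ≤ LinearMap.ker g' := by
    rw [← ht, Submodule.span_le]
    intro w hw
    simp only [SetLike.mem_coe, LinearMap.mem_ker]
    rw [hg'sum]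
    have := hy (Sum.inl ⟨w, hw⟩)
    simpa [hA, hb] using this
  obtain ⟨g, hg⟩ := descend π hπ g' hker
  refine ⟨g, ?_⟩
  apply LinearMap.ext_on hsM
  intro a ha
  have h1 : g (f a) = g' (c ⟨a, ha⟩) := by
    rw [← hc ⟨a, ha⟩, ← LinearMap.comp_apply, hg]
  rw [LinearMap.comp_apply, h1, hg'sum]
  have := hy (Sum.inr ⟨a, ha⟩)
  simpa [hA, hb] using this

/-- The factorization property for a plain linear map, from elementwise purity. -/
lemma FP_of_EP {φ : K →ₗ[R] L} (hE : EP φ) :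
    modulePureMonomorphisms R (ModuleCat.ofHom φ) := by
  intro M N f uu v hM hN hsq
  haveI : Module.FinitePresentation R ↥M := hM
  haveI : Module.FinitePresentation R ↥N := hN
  obtain ⟨g, hg⟩ := EF hE inferInstance inferInstance f.hom uu.hom v.hom
    (congrArg ModuleCat.Hom.hom hsq)
  exact ⟨ModuleCat.ofHom g, ModuleCat.hom_ext hg⟩

lemma punit_fp : Module.FinitePresentation R PUnit.{u+1} := by
  apply Module.finitePresentation_of_surjective (0 : R →ₗ[R] PUnit.{u+1})
  · intro y; exact ⟨0, Subsingleton.elim _ _⟩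
  · rw [LinearMap.ker_zero]
    exact Module.Finite.fg_top

/-- a tuple of elements gives a linear map out of a finite free module -/
noncomputable def tup {X : Type u} [AddCommGroup X] [Module R X] {n : ℕ} (c : Fin n → X) :
    (Fin n → R) →ₗ[R] X :=
  ∑ i, LinearMap.toSpanSingleton R X (c i) ∘ₗ LinearMap.proj i

lemma tup_apply {X : Type u} [AddCommGroup X] [Module R X] {n : ℕ} (c : Fin n → X)
    (r : Fin n → R) : tup (R := R) c r = ∑ i, r i • c i := by
  simp [tup, LinearMap.toSpanSingleton_apply]

lemma tup_single {X : Type u} [AddCommGroup X] [Module R X] {n : ℕ} (c : Fin n → X)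
    (i : Fin n) : tup (R := R) c (Pi.single i 1) = c i := by
  classical
  rw [tup_apply]
  rw [Finset.sum_eq_single i]
  · simp
  · intro j _ hj; simp [Pi.single_apply, hj]
  · simp

/-- factorization purity gives injectivity and elementwise purity -/
lemma FE {K' L' : ModuleCat.{u} R} (h : K' ⟶ L') (hp : modulePureMonomorphisms R h) :
    Function.Injective h ∧ EP h.hom := by
  constructor
  · rw [injective_iff_map_eq_zero]
    intro k hk
    have hsq : (ModuleCat.ofHom (LinearMap.toSpanSingleton R ↥K' k)) ≫ h
        = (ModuleCat.ofHom (0 : R →ₗ[R] PUnit.{u+1})) ≫ (ModuleCat.ofHom (0 : PUnit.{u+1} →ₗ[R] ↥L')) := by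
      apply ModuleCat.hom_ext; apply LinearMap.ext; intro r
      show h (r • k) = 0
      rw [map_smul, hk, smul_zero]
    obtain ⟨g, hg⟩ := hp (M := ModuleCat.of R R) (N := ModuleCat.of R PUnit.{u+1})
      (ModuleCat.ofHom (0 : R →ₗ[R] PUnit.{u+1}))
      (ModuleCat.ofHom (LinearMap.toSpanSingleton R ↥K' k))
      (ModuleCat.ofHom (0 : PUnit.{u+1} →ₗ[R] ↥L'))
      (inferInstanceAs (Module.FinitePresentation R R)) punit_fp hsq
    have h2 : g.hom.comp (0 : R →ₗ[R] PUnit.{u+1}) = LinearMap.toSpanSingleton R ↥K' k :=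
        congrArg ModuleCat.Hom.hom hg
    have := LinearMap.congr_fun h2 (1 : R)
    simpa using this.symm
  · intro m n A b hx
    obtain ⟨x, hx⟩ := hx
    have hsq : (ModuleCat.ofHom (tup (R := R) b)) ≫ h
        = (ModuleCat.ofHom (LinearMap.pi (fun j => tup (fun i => A i j)))) ≫ (ModuleCat.ofHom (tup (R := R) x)) := by
      apply ModuleCat.hom_ext; apply LinearMap.ext; intro r
      show h (tup b r) = tup x ((LinearMap.pi (fun j => tup (fun i => A i j))) r)
      have lhs : h (tup (R := R) b r) = ∑ i, r i • h (b i) := by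
        rw [tup_apply, map_sum]; simp [map_smul]
      have hpi : ∀ j, (LinearMap.pi (R := R) (fun j => tup (fun i => A i j)) r) j
          = ∑ i, r i * A i j := by
        intro j; simp [LinearMap.pi_apply, tup_apply]
      have rhs : tup (R := R) x ((LinearMap.pi (fun j => tup (fun i => A i j))) r)
          = ∑ j, (∑ i, r i * A i j) • x j := by
        rw [tup_apply]; simp only [hpi]
      rw [lhs, rhs]
      calc ∑ i, r i • h (b i) = ∑ i, r i • ∑ j, A i j • x j := by simp only [hx]
        _ = ∑ i, ∑ j, (r i * A i j) • x j := by simp [Finset.smul_sum, mul_smul]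
        _ = ∑ j, ∑ i, (r i * A i j) • x j := Finset.sum_comm
        _ = ∑ j, (∑ i, r i * A i j) • x j := by simp [Finset.sum_smul]
    obtain ⟨g, hg⟩ := hp (M := ModuleCat.of R (Fin m → R)) (N := ModuleCat.of R (Fin n → R))
      (ModuleCat.ofHom (LinearMap.pi (fun j => tup (fun i => A i j))))
      (ModuleCat.ofHom (tup b)) (ModuleCat.ofHom (tup x)) (inferInstanceAs (Module.FinitePresentation R (Fin m → R))) (inferInstanceAs (Module.FinitePresentation R (Fin n → R))) hsq
    refine ⟨fun j => g (Pi.single j 1), fun i => ?_⟩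
    have h1 : (fun j => A i j) = ∑ j, A i j • (Pi.single j 1 : Fin n → R) := by
      funext k'
      simp only [Finset.sum_apply, Pi.smul_apply, Pi.single_apply, smul_eq_mul,
        mul_ite, mul_one, mul_zero]
      rw [Finset.sum_eq_single k']
      · simp
      · intro b₁ _ hb₁
        exact if_neg fun hh => hb₁ hh.symm
      · intro hk'; exact absurd (Finset.mem_univ k') hk'
    have h2 : (LinearMap.pi (R := R) (fun j => tup (fun i => A i j))) (Pi.single i 1)
        = fun j => A i j := by
      funext j
      simp [LinearMap.pi_apply, tup_single]
    have h3 := LinearMap.congr_fun (congrArg ModuleCat.Hom.hom hg) (Pi.single i 1)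
    show _ = b i
    rw [← tup_single (R := R) b i]
    refine Eq.trans ?_ h3
    show ∑ j, A i j • g (Pi.single j 1) = g ((LinearMap.pi fun j => tup fun i => A i j) (Pi.single i 1))
    rw [h2, h1]
    rw [map_sum]
    simp [map_smul]


end Maps

section Pairs

variable {L : Type u} [AddCommGroup L] [Module R L]

/-- relative elementwise purity of a pair of submodules -/
def EPpair (A C : Submodule R L) : Prop :=
  ∀ (m n : ℕ) (G : Fin m → Fin n → R) (b : Fin m → L), (∀ i, b i ∈ A) →
    (∃ x : Fin n → L, (∀ j, x j ∈ C) ∧ ∀ i, ∑ j, G i j • x j = b i) →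
    ∃ y : Fin n → L, (∀ j, y j ∈ A) ∧ ∀ i, ∑ j, G i j • y j = b i

variable (R) in
/-- the relevant cardinal bound -/
noncomputable def kappa : Cardinal.{u} := max #R ℵ₀

lemma aleph0_le_kappa : ℵ₀ ≤ kappa R := le_max_right _ _

lemma card_fin_fun {X : Type u} (hX : #X ≤ kappa R) (n : ℕ) : #(Fin n → X) ≤ kappa R := by
  induction n with
  | zero =>
    have : Subsingleton (Fin 0 → X) := ⟨fun a b => funext fun i => i.elim0⟩
    calc #(Fin 0 → X) ≤ 1 := Cardinal.le_one_iff_subsingleton.2 this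
      _ ≤ kappa R := le_trans Cardinal.one_le_aleph0 aleph0_le_kappa
  | succ n ih =>
    calc #(Fin (n+1) → X) = #(X × (Fin n → X)) := Cardinal.mk_congr (Fin.consEquiv fun _ => X).symm
      _ = #X * #(Fin n → X) := by rw [Cardinal.mk_prod, Cardinal.lift_id, Cardinal.lift_id]
      _ ≤ kappa R * kappa R := mul_le_mul' hX ih
      _ = kappa R := Cardinal.mul_eq_self aleph0_le_kappa

lemma card_span {s : Set L} (hs : #s ≤ kappa R) :
    #(Submodule.span R s) ≤ kappa R := by
  classical
  have hRs : #(R × ↥s) ≤ kappa R := by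
    calc #(R × ↥s) = #R * #↥s := by rw [Cardinal.mk_prod, Cardinal.lift_id, Cardinal.lift_id]
      _ ≤ kappa R * kappa R := mul_le_mul' (le_max_left _ _) hs
      _ = kappa R := Cardinal.mul_eq_self aleph0_le_kappa
  set T' := Σ nn : ULift.{u} ℕ, (Fin nn.down → R × ↥s) with hT'
  have hsurj : ∃ F : T' → ↥(Submodule.span R s), Function.Surjective F := by
    refine ⟨fun τ => ⟨∑ i, (τ.2 i).1 • ((τ.2 i).2 : L), ?_⟩, ?_⟩
    · exact Submodule.sum_mem _ fun i _ =>
        Submodule.smul_mem _ _ (Submodule.subset_span (τ.2 i).2.2)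
    · rintro ⟨z, hz⟩
      obtain ⟨n, f, g, hsum⟩ := Submodule.mem_span_set'.1 hz
      exact ⟨⟨⟨n⟩, fun i => (f i, g i)⟩, Subtype.ext hsum⟩
  obtain ⟨F, hF⟩ := hsurj
  calc #(Submodule.span R s) ≤ #T' := Cardinal.mk_le_of_surjective hF
    _ = Cardinal.sum (fun nn : ULift.{u} ℕ => #(Fin nn.down → R × ↥s)) := Cardinal.mk_sigma _
    _ ≤ Cardinal.sum (fun _ : ULift.{u} ℕ => kappa R) :=
        Cardinal.sum_le_sum _ _ fun nn => card_fin_fun hRs nn.down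
    _ = #(ULift.{u} ℕ) * kappa R := Cardinal.sum_const' _ _
    _ ≤ kappa R * kappa R := mul_le_mul' (by rw [Cardinal.mk_eq_aleph0]; exact aleph0_le_kappa) le_rfl
    _ = kappa R := Cardinal.mul_eq_self aleph0_le_kappa

section Construction

variable (D : Submodule R L) (hD : EPpair D (⊤ : Submodule R L))

/-- tasks for closing under purity of `D ⊓ C` in `C` -/
def Tsk3 (W : Submodule R L) : Type u :=
  Σ mn : ULift.{u} (ℕ × ℕ),
    (Fin mn.down.1 → Fin mn.down.2 → R) × (Fin mn.down.1 → ↥W) × (Fin mn.down.2 → ↥W)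

/-- tasks for closing under purity of `(D + C)/D` in `L/D` -/
def Tsk4 (W : Submodule R L) : Type u :=
  Σ mn : ULift.{u} (ℕ × ℕ), (Fin mn.down.1 → Fin mn.down.2 → R) × (Fin mn.down.1 → ↥W)

instance (W : Submodule R L) : Nonempty (Tsk3 W) :=
  ⟨⟨⟨(0, 0)⟩, fun i => i.elim0, fun i => i.elim0, fun i => i.elim0⟩⟩

instance (W : Submodule R L) : Nonempty (Tsk4 W) :=
  ⟨⟨⟨(0, 0)⟩, fun i => i.elim0, fun i => i.elim0⟩⟩

/-- chosen solutions for a type-3 task -/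
noncomputable def sol3 (m n : ℕ) (G : Fin m → Fin n → R) (b : Fin m → L) (x : Fin n → L) :
    Set L := by
  classical
  exact if h : (∀ i, b i ∈ D) ∧ (∀ i, ∑ j, G i j • x j = b i)
  then Set.range (hD m n G b h.1 ⟨x, fun _ => Submodule.mem_top, h.2⟩).choose
  else ∅

lemma sol3_spec {m n : ℕ} {G : Fin m → Fin n → R} {b : Fin m → L} {x : Fin n → L}
    (h1 : ∀ i, b i ∈ D) (h2 : ∀ i, ∑ j, G i j • x j = b i) :
    ∃ y : Fin n → L, sol3 D hD m n G b x = Set.range y ∧ (∀ j, y j ∈ D) ∧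
      ∀ i, ∑ j, G i j • y j = b i := by
  classical
  rw [sol3, dif_pos ⟨h1, h2⟩]
  exact ⟨_, rfl, (hD m n G b h1 ⟨x, fun _ => Submodule.mem_top, h2⟩).choose_spec.1,
    (hD m n G b h1 ⟨x, fun _ => Submodule.mem_top, h2⟩).choose_spec.2⟩

lemma sol3_finite (m n : ℕ) (G : Fin m → Fin n → R) (b : Fin m → L) (x : Fin n → L) :
    (sol3 D hD m n G b x).Finite := by
  classical
  rw [sol3]
  split
  · exact Set.finite_range _
  · exact Set.finite_empty

/-- chosen solutions for a type-4 task -/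
noncomputable def sol4 (m n : ℕ) (G : Fin m → Fin n → R) (b : Fin m → L) : Set L := by
  classical
  exact if h : ∃ x : Fin n → L, ∀ i, ∑ j, G i j • x j - b i ∈ D
  then Set.range h.choose
  else ∅

lemma sol4_spec {m n : ℕ} {G : Fin m → Fin n → R} {b : Fin m → L}
    (h : ∃ x : Fin n → L, ∀ i, ∑ j, G i j • x j - b i ∈ D) :
    ∃ y : Fin n → L, sol4 D m n G b = Set.range y ∧ ∀ i, ∑ j, G i j • y j - b i ∈ D := by
  classical
  rw [sol4, dif_pos h]
  exact ⟨_, rfl, h.choose_spec⟩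

lemma sol4_finite (m n : ℕ) (G : Fin m → Fin n → R) (b : Fin m → L) :
    (sol4 D m n G b).Finite := by
  classical
  rw [sol4]
  split
  · exact Set.finite_range _
  · exact Set.finite_empty

/-- one closure step -/
noncomputable def step (W : Submodule R L) : Set L :=
  (⋃ τ : Tsk3 W, sol3 D hD τ.1.down.1 τ.1.down.2 τ.2.1
      (fun i => (τ.2.2.1 i : L)) (fun j => (τ.2.2.2 j : L))) ∪
  (⋃ τ : Tsk4 W, sol4 D τ.1.down.1 τ.1.down.2 τ.2.1 (fun i => (τ.2.2 i : L)))

/-- the tower of generating sets -/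
noncomputable def SS (x₀ : L) : ℕ → Set L
  | 0 => {x₀}
  | n+1 => SS x₀ n ∪ step D hD (Submodule.span R (SS x₀ n))

variable (x₀ : L)

/-- the tower of submodules -/
noncomputable def WW (n : ℕ) : Submodule R L := Submodule.span R (SS D hD x₀ n)

lemma WW_mono : Monotone (WW D hD x₀) := by
  have h : ∀ n, WW D hD x₀ n ≤ WW D hD x₀ (n+1) := fun n =>
    Submodule.span_mono Set.subset_union_left
  exact monotone_nat_of_le_succ h

/-- the pure closure of x₀ over D -/
noncomputable def CC : Submodule R L := ⨆ n, WW D hD x₀ n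

lemma mem_CC {z : L} : z ∈ CC D hD x₀ ↔ ∃ n, z ∈ WW D hD x₀ n :=
  Submodule.mem_iSup_of_chain ⟨WW D hD x₀, WW_mono D hD x₀⟩ z

lemma WW_le_CC (n : ℕ) : WW D hD x₀ n ≤ CC D hD x₀ := le_iSup _ n

lemma x₀_mem_CC : x₀ ∈ CC D hD x₀ :=
  WW_le_CC D hD x₀ 0 (Submodule.subset_span (by simp [SS]))

lemma exists_stage {k : ℕ} (v : Fin k → L) (hv : ∀ i, v i ∈ CC D hD x₀) :
    ∃ n, ∀ i, v i ∈ WW D hD x₀ n := by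
  choose nf hnf using fun i => (mem_CC D hD x₀).1 (hv i)
  refine ⟨Finset.univ.sup nf, fun i => ?_⟩
  exact WW_mono D hD x₀ (Finset.le_sup (Finset.mem_univ i)) (hnf i)

lemma step_sub (n : ℕ) : step D hD (WW D hD x₀ n) ⊆ SS D hD x₀ (n+1) := by
  rw [show SS D hD x₀ (n+1) = SS D hD x₀ n ∪ step D hD (Submodule.span R (SS D hD x₀ n)) from rfl]
  exact Set.subset_union_right

lemma closure3 : EPpair (D ⊓ CC D hD x₀) (CC D hD x₀) := by
  intro m n G b hb hx
  obtain ⟨x, hxC, hxe⟩ := hx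
  obtain ⟨N₁, hN₁⟩ := exists_stage D hD x₀ b (fun i => ((hb i).2))
  obtain ⟨N₂, hN₂⟩ := exists_stage D hD x₀ x hxC
  set N := max N₁ N₂
  have hbN : ∀ i, b i ∈ WW D hD x₀ N := fun i => WW_mono D hD x₀ (le_max_left _ _) (hN₁ i)
  have hxN : ∀ j, x j ∈ WW D hD x₀ N := fun j => WW_mono D hD x₀ (le_max_right _ _) (hN₂ j)
  obtain ⟨y, hyr, hyD, hye⟩ := sol3_spec D hD (fun i => (hb i).1) hxe
  refine ⟨y, fun j => ⟨hyD j, ?_⟩, hye⟩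
  have : y j ∈ sol3 D hD m n G b x := hyr ▸ Set.mem_range_self j
  have hsub : sol3 D hD m n G b x ⊆ step D hD (WW D hD x₀ N) := by
    intro z hz
    apply Set.subset_union_left
    refine Set.mem_iUnion.2 ⟨⟨⟨(m, n)⟩, G, fun i => ⟨b i, hbN i⟩, fun j => ⟨x j, hxN j⟩⟩, hz⟩
  exact WW_le_CC D hD x₀ (N+1)
    (Submodule.subset_span (step_sub D hD x₀ N (hsub this)))

lemma closure4 (m n : ℕ) (G : Fin m → Fin n → R) (b : Fin m → L)
    (hb : ∀ i, b i ∈ CC D hD x₀)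
    (hx : ∃ x : Fin n → L, ∀ i, ∑ j, G i j • x j - b i ∈ D) :
    ∃ x : Fin n → L, (∀ j, x j ∈ CC D hD x₀) ∧ ∀ i, ∑ j, G i j • x j - b i ∈ D := by
  obtain ⟨N, hN⟩ := exists_stage D hD x₀ b hb
  obtain ⟨y, hyr, hye⟩ := sol4_spec D (b := b) (G := G) hx
  refine ⟨y, fun j => ?_, hye⟩
  have : y j ∈ sol4 D m n G b := hyr ▸ Set.mem_range_self j
  have hsub : sol4 D m n G b ⊆ step D hD (WW D hD x₀ N) := by
    intro z hz
    apply Set.subset_union_right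
    refine Set.mem_iUnion.2 ⟨⟨⟨(m, n)⟩, G, fun i => ⟨b i, hN i⟩⟩, hz⟩
  exact WW_le_CC D hD x₀ (N+1)
    (Submodule.subset_span (step_sub D hD x₀ N (hsub this)))


lemma card_tsk3 {W : Submodule R L} (hW : #↥W ≤ kappa R) : #(Tsk3 (R := R) W) ≤ kappa R := by
  rw [Tsk3, Cardinal.mk_sigma]
  calc Cardinal.sum (fun mn : ULift.{u} (ℕ × ℕ) =>
        #((Fin mn.down.1 → Fin mn.down.2 → R) × (Fin mn.down.1 → ↥W) × (Fin mn.down.2 → ↥W)))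
      ≤ Cardinal.sum (fun _ : ULift.{u} (ℕ × ℕ) => kappa R) := by
        apply Cardinal.sum_le_sum
        intro mn
        rw [Cardinal.mk_prod, Cardinal.lift_id, Cardinal.lift_id,
          Cardinal.mk_prod, Cardinal.lift_id, Cardinal.lift_id]
        calc #(Fin mn.down.1 → Fin mn.down.2 → R) * (#(Fin mn.down.1 → ↥W) * #(Fin mn.down.2 → ↥W))
            ≤ kappa R * (kappa R * kappa R) := by
              apply mul_le_mul'
              · exact card_fin_fun (card_fin_fun (le_max_left _ _) _) _
              · exact mul_le_mul' (card_fin_fun hW _) (card_fin_fun hW _)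
          _ = kappa R := by
              rw [Cardinal.mul_eq_self aleph0_le_kappa, Cardinal.mul_eq_self aleph0_le_kappa]
    _ = #(ULift.{u} (ℕ × ℕ)) * kappa R := Cardinal.sum_const' _ _
    _ ≤ kappa R * kappa R := mul_le_mul' (by rw [Cardinal.mk_eq_aleph0]; exact aleph0_le_kappa) le_rfl
    _ = kappa R := Cardinal.mul_eq_self aleph0_le_kappa

lemma card_tsk4 {W : Submodule R L} (hW : #↥W ≤ kappa R) : #(Tsk4 (R := R) W) ≤ kappa R := by
  rw [Tsk4, Cardinal.mk_sigma]
  calc Cardinal.sum (fun mn : ULift.{u} (ℕ × ℕ) =>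
        #((Fin mn.down.1 → Fin mn.down.2 → R) × (Fin mn.down.1 → ↥W)))
      ≤ Cardinal.sum (fun _ : ULift.{u} (ℕ × ℕ) => kappa R) := by
        apply Cardinal.sum_le_sum
        intro mn
        rw [Cardinal.mk_prod, Cardinal.lift_id, Cardinal.lift_id]
        calc #(Fin mn.down.1 → Fin mn.down.2 → R) * #(Fin mn.down.1 → ↥W)
            ≤ kappa R * kappa R :=
              mul_le_mul' (card_fin_fun (card_fin_fun (le_max_left _ _) _) _) (card_fin_fun hW _)
          _ = kappa R := Cardinal.mul_eq_self aleph0_le_kappa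
    _ = #(ULift.{u} (ℕ × ℕ)) * kappa R := Cardinal.sum_const' _ _
    _ ≤ kappa R * kappa R := mul_le_mul' (by rw [Cardinal.mk_eq_aleph0]; exact aleph0_le_kappa) le_rfl
    _ = kappa R := Cardinal.mul_eq_self aleph0_le_kappa

lemma card_iUnion_finite {ι : Type u} [Nonempty ι] (f : ι → Set L) (hι : #ι ≤ kappa R)
    (hf : ∀ i, (f i).Finite) : #↥(⋃ i, f i) ≤ kappa R := by
  calc #↥(⋃ i, f i) ≤ #ι * ⨆ i, #↥(f i) := Cardinal.mk_iUnion_le f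
    _ ≤ kappa R * kappa R := by
        apply mul_le_mul' hι
        apply ciSup_le'
        intro i
        haveI := (hf i).to_subtype
        exact le_trans (Cardinal.lt_aleph0_of_finite _).le aleph0_le_kappa
    _ = kappa R := Cardinal.mul_eq_self aleph0_le_kappa

lemma card_step {W : Submodule R L} (hW : #↥W ≤ kappa R) : #↥(step D hD W) ≤ kappa R := by
  rw [step]
  refine le_trans (Cardinal.mk_union_le _ _) ?_
  have h3 : #↥(⋃ τ : Tsk3 (R := R) W, sol3 D hD τ.1.down.1 τ.1.down.2 τ.2.1
      (fun i => (τ.2.2.1 i : L)) (fun j => (τ.2.2.2 j : L))) ≤ kappa R :=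
    card_iUnion_finite _ (card_tsk3 hW) (fun τ => sol3_finite D hD _ _ _ _ _)
  have h4 : #↥(⋃ τ : Tsk4 (R := R) W, sol4 D τ.1.down.1 τ.1.down.2 τ.2.1
      (fun i => (τ.2.2 i : L))) ≤ kappa R :=
    card_iUnion_finite _ (card_tsk4 hW) (fun τ => sol4_finite D _ _ _ _)
  calc _ ≤ kappa R + kappa R := add_le_add h3 h4
    _ = kappa R := Cardinal.add_eq_self aleph0_le_kappa

lemma card_SS (x₀ : L) (n : ℕ) : #↥(SS D hD x₀ n) ≤ kappa R := by
  induction n with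
  | zero =>
    rw [show SS D hD x₀ 0 = {x₀} from rfl, Cardinal.mk_singleton]
    exact le_trans Cardinal.one_le_aleph0 aleph0_le_kappa
  | succ n ih =>
    rw [show SS D hD x₀ (n+1) = SS D hD x₀ n ∪ step D hD (Submodule.span R (SS D hD x₀ n)) from rfl]
    refine le_trans (Cardinal.mk_union_le _ _) ?_
    have h2 : #↥(step D hD (Submodule.span R (SS D hD x₀ n))) ≤ kappa R :=
      card_step D hD (card_span ih)
    calc _ ≤ kappa R + kappa R := add_le_add ih h2
      _ = kappa R := Cardinal.add_eq_self aleph0_le_kappa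

lemma card_CC (x₀ : L) : #↥(CC D hD x₀) ≤ kappa R := by
  have h1 : ((⨆ n, WW D hD x₀ n : Submodule R L) : Set L)
      = ⋃ k : ℕ, ((WW D hD x₀ k : Submodule R L) : Set L) :=
    Submodule.coe_iSup_of_chain ⟨WW D hD x₀, WW_mono D hD x₀⟩
  have hset : ((CC D hD x₀ : Submodule R L) : Set L)
      = ⋃ n : ULift.{u} ℕ, ((WW D hD x₀ n.down : Submodule R L) : Set L) := by
    rw [CC, h1]
    ext z
    simp only [Set.mem_iUnion]
    exact ⟨fun ⟨k, hk⟩ => ⟨⟨k⟩, hk⟩, fun ⟨k, hk⟩ => ⟨k.down, hk⟩⟩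
  rw [show #↥(CC D hD x₀) = #↥((CC D hD x₀ : Submodule R L) : Set L) from rfl, hset]
  calc #↥(⋃ n : ULift.{u} ℕ, ((WW D hD x₀ n.down : Submodule R L) : Set L))
      ≤ #(ULift.{u} ℕ) * ⨆ n : ULift.{u} ℕ, #↥((WW D hD x₀ n.down : Submodule R L) : Set L) :=
        Cardinal.mk_iUnion_le _
    _ ≤ kappa R * kappa R := by
        apply mul_le_mul' (by rw [Cardinal.mk_eq_aleph0]; exact aleph0_le_kappa)
        exact ciSup_le' fun n => card_span (card_SS D hD x₀ n.down)
    _ = kappa R := Cardinal.mul_eq_self aleph0_le_kappa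


lemma sup_pure (x₀ : L) : EPpair (D ⊔ CC D hD x₀) (⊤ : Submodule R L) := by
  intro m n G b hb hx
  obtain ⟨x, _, hxe⟩ := hx
  have hdec : ∀ i, ∃ dd cc : L, dd ∈ D ∧ cc ∈ CC D hD x₀ ∧ dd + cc = b i := by
    intro i
    obtain ⟨dd, hdd, cc, hcc, h⟩ := Submodule.mem_sup.1 (hb i)
    exact ⟨dd, cc, hdd, hcc, h⟩
  choose d c hd hc hdc using hdec
  have hx4 : ∃ x' : Fin n → L, ∀ i, ∑ j, G i j • x' j - c i ∈ D := by
    refine ⟨x, fun i => ?_⟩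
    rw [hxe i, ← hdc i]
    simpa using hd i
  obtain ⟨x', hx'C, hx'⟩ := closure4 D hD x₀ m n G c hc hx4
  set e : Fin m → L := fun i => b i - ∑ j, G i j • x' j with he
  have heD : ∀ i, e i ∈ D := by
    intro i
    have h1 : e i = d i - (∑ j, G i j • x' j - c i) := by
      simp only [he]; rw [← hdc i]; abel
    rw [h1]
    exact Submodule.sub_mem _ (hd i) (hx' i)
  have hsol : ∃ yy : Fin n → L, (∀ j, yy j ∈ (⊤ : Submodule R L)) ∧
      ∀ i, ∑ j, G i j • yy j = e i := by
    refine ⟨fun j => x j - x' j, fun _ => trivial, fun i => ?_⟩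
    simp only [he]
    rw [← hxe i]
    simp [smul_sub, Finset.sum_sub_distrib]
  obtain ⟨y, hyD, hy⟩ := hD m n G e heD hsol
  refine ⟨fun j => y j + x' j, fun j => Submodule.add_mem_sup (hyD j) (hx'C j), fun i => ?_⟩
  have : ∑ j, G i j • (y j + x' j) = (∑ j, G i j • y j) + ∑ j, G i j • x' j := by
    simp [smul_add, Finset.sum_add_distrib]
  rw [this, hy i]
  simp only [he]
  abel

end Construction

variable {K K' L' : Type u} [AddCommGroup K] [Module R K] [AddCommGroup K'] [Module R K']
  [AddCommGroup L'] [Module R L']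

lemma EPpair.inclusion_ep {A C : Submodule R L} (hAC : A ≤ C) (h : EPpair A C) :
    EP (Submodule.inclusion hAC) := by
  intro m n G b hx
  obtain ⟨x, hx⟩ := hx
  have hx' : ∀ i, ∑ j, G i j • ((x j : L)) = ((b i : L)) := by
    intro i
    have := congrArg (Subtype.val) (hx i)
    simpa using this
  obtain ⟨y, hyA, hy⟩ := h m n G (fun i => (b i : L)) (fun i => (b i).2)
    ⟨fun j => x j, fun j => (x j).2, hx'⟩
  refine ⟨fun j => ⟨y j, hyA j⟩, fun i => Subtype.ext ?_⟩
  simpa using hy i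

lemma EP.congr {h : K →ₗ[R] L} (hE : EP h) (e₁ : K' ≃ₗ[R] K) (e₂ : L ≃ₗ[R] L') :
    EP (e₂.toLinearMap ∘ₗ h ∘ₗ e₁.toLinearMap) := by
  intro m n G b hx
  obtain ⟨x, hx⟩ := hx
  have hpre : ∃ x' : Fin n → L, ∀ i, ∑ j, G i j • x' j = h (e₁ (b i)) := by
    refine ⟨fun j => e₂.symm (x j), fun i => ?_⟩
    apply e₂.injective
    rw [map_sum]
    simp only [map_smul, LinearEquiv.apply_symm_apply]
    rw [hx i]
    simp
  obtain ⟨y, hy⟩ := hE m n G (fun i => e₁ (b i)) hpre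
  refine ⟨fun j => e₁.symm (y j), fun i => ?_⟩
  apply e₁.injective
  rw [map_sum]
  simp only [map_smul, LinearEquiv.apply_symm_apply]
  rw [hy i]

variable (R) in
/-- the big free module -/
abbrev BigFree : Type u := (R × ℕ) →₀ R

lemma kappa_le_card : kappa R ≤ #(R × ℕ) := by
  haveI : Nonempty R := ⟨0⟩
  apply max_le
  · exact Cardinal.mk_le_of_injective (f := fun r : R => ((r, 0) : R × ℕ))
      (fun a b h => congrArg Prod.fst h)
  · exact Cardinal.infinite_iff.1 inferInstance

lemma exists_quot_equiv (X : Type u) [AddCommGroup X] [Module R X] (hX : #X ≤ #(R × ℕ)) :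
    ∃ (N' : Submodule R (BigFree R)) (e : ((BigFree R) ⧸ N') ≃ₗ[R] X), True := by
  haveI : Nonempty X := ⟨0⟩
  obtain ⟨emb⟩ := Cardinal.le_def _ _ |>.1 hX
  have hsurj : Function.Surjective (Function.invFun emb) :=
    Function.invFun_surjective emb.injective
  set ψ : BigFree R →ₗ[R] X := Finsupp.linearCombination R (Function.invFun emb) with hψ
  have hψs : Function.Surjective ψ := by
    rw [← LinearMap.range_eq_top, hψ, Finsupp.range_linearCombination,
      hsurj.range_eq, Submodule.span_univ]
  exact ⟨LinearMap.ker ψ, LinearMap.quotKerEquivOfSurjective ψ hψs, trivial⟩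



end Pairs

end PureGenAux

namespace PureGenAux

open CategoryTheory Cardinal PureGen

set_option linter.unusedSectionVars false

variable {R : Type u} [Ring R]

/-- The index set of generating pure monomorphisms. -/
structure PGI (R : Type u) [Ring R] : Type u where
  N₁ : Submodule R (BigFree R)
  N₂ : Submodule R (BigFree R)
  φ : ((BigFree R) ⧸ N₁) →ₗ[R] ((BigFree R) ⧸ N₂)
  pure : PureGen.modulePureMonomorphisms R (ModuleCat.ofHom φ)

section Endgame

variable {Q : Type u} [AddCommGroup Q] [Module R Q]
variable {L : Type u} [AddCommGroup L] [Module R L]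

lemma extend_step
    (hQ : ∀ i : PGI R, ∀ uu : ((BigFree R) ⧸ i.N₁) →ₗ[R] Q,
      ∃ g : ((BigFree R) ⧸ i.N₂) →ₗ[R] Q, g ∘ₗ i.φ = uu)
    (p : L →ₗ.[R] Q) (hp : EPpair p.domain (⊤ : Submodule R L)) (x₀ : L) :
    ∃ p' : L →ₗ.[R] Q, p ≤ p' ∧ x₀ ∈ p'.domain ∧ EPpair p'.domain (⊤ : Submodule R L) := by
  classical
  set D := p.domain with hDdef
  set C := CC D hp x₀ with hCdef
  have hA₀C : D ⊓ C ≤ C := inf_le_right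
  have hA₀D : D ⊓ C ≤ D := inf_le_left
  have hpair : EPpair (D ⊓ C) C := closure3 D hp x₀
  have hEPincl : EP (Submodule.inclusion hA₀C) := hpair.inclusion_ep hA₀C
  have hcC : #↥C ≤ #(R × ℕ) := le_trans (card_CC D hp x₀) kappa_le_card
  have hcA : #↥(D ⊓ C) ≤ #(R × ℕ) :=
    le_trans (Cardinal.mk_le_of_injective (Submodule.inclusion_injective hA₀C)) hcC
  obtain ⟨N₁, e₁, -⟩ := exists_quot_equiv (↥(D ⊓ C)) hcA
  obtain ⟨N₂, e₂, -⟩ := exists_quot_equiv (↥C) hcC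
  set φ : ((BigFree R) ⧸ N₁) →ₗ[R] ((BigFree R) ⧸ N₂) :=
    e₂.symm.toLinearMap ∘ₗ (Submodule.inclusion hA₀C) ∘ₗ e₁.toLinearMap with hφ
  have hEPφ : EP φ := hEPincl.congr e₁ e₂.symm
  set g₀ : ↥(D ⊓ C) →ₗ[R] Q := p.toFun ∘ₗ Submodule.inclusion hA₀D with hg₀
  obtain ⟨g1, hg1⟩ := hQ ⟨N₁, N₂, φ, FP_of_EP hEPφ⟩ (g₀ ∘ₗ e₁.toLinearMap)
  set g2 : ↥C →ₗ[R] Q := g1 ∘ₗ e₂.symm.toLinearMap with hg2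
  have key : ∀ (a : L) (haD : a ∈ D) (haC : a ∈ C), g2 ⟨a, haC⟩ = p.toFun ⟨a, haD⟩ := by
    intro a haD haC
    set w : ↥(D ⊓ C) := ⟨a, ⟨haD, haC⟩⟩ with hw
    have h3 : (⟨a, haC⟩ : ↥C) = (Submodule.inclusion hA₀C) (e₁ (e₁.symm w)) := by
      rw [LinearEquiv.apply_symm_apply]
      rfl
    have h4 : g2 ⟨a, haC⟩ = g1 (φ (e₁.symm w)) := by
      rw [hg2, LinearMap.comp_apply, h3]
      rfl
    rw [h4, ← LinearMap.comp_apply, hg1]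
    show g₀ (e₁ (e₁.symm w)) = _
    rw [LinearEquiv.apply_symm_apply]
    rfl
  set pc : L →ₗ.[R] Q := ⟨C, g2⟩ with hpc
  have hag : ∀ (x : ↥p.domain) (y : ↥pc.domain), (x : L) = (y : L) → p x = pc y := by
    intro x y hxy
    have haD : (y : L) ∈ D := hxy ▸ x.2
    have hx : x = ⟨(y : L), haD⟩ := Subtype.ext hxy
    have hy : pc y = g2 ⟨(y : L), y.2⟩ := rfl
    rw [hx, hy, key (y : L) haD y.2]
    rfl
  refine ⟨p.sup pc hag, p.left_le_sup pc hag, ?_, ?_⟩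
  · show x₀ ∈ (p.sup pc hag).domain
    rw [LinearPMap.domain_sup]
    exact Submodule.mem_sup_right (x₀_mem_CC D hp x₀)
  · rw [LinearPMap.domain_sup]
    exact sup_pure D hp x₀

lemma main
    (hQ : ∀ i : PGI R, ∀ uu : ((BigFree R) ⧸ i.N₁) →ₗ[R] Q,
      ∃ g : ((BigFree R) ⧸ i.N₂) →ₗ[R] Q, g ∘ₗ i.φ = uu)
    (D₀ : Submodule R L) (hD₀ : EPpair D₀ (⊤ : Submodule R L)) (f₀ : ↥D₀ →ₗ[R] Q) :
    ∃ g : L →ₗ[R] Q, ∀ (a : L) (ha : a ∈ D₀), g a = f₀ ⟨a, ha⟩ := by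
  classical
  set s : Set (L →ₗ.[R] Q) :=
    {q | EPpair q.domain (⊤ : Submodule R L) ∧
      ∃ hle : D₀ ≤ q.domain, ∀ x : ↥D₀, q ⟨(x : L), hle x.2⟩ = f₀ x} with hs
  have hbase : (⟨D₀, f₀⟩ : L →ₗ.[R] Q) ∈ s := ⟨hD₀, le_refl _, fun x => rfl⟩
  have hchains : ∀ c ⊆ s, IsChain (· ≤ ·) c → ∀ y ∈ c, ∃ ub ∈ s, ∀ z ∈ c, z ≤ ub := by
    intro c hcs hchain y hy
    have hdir : DirectedOn (· ≤ ·) c := hchain.directedOn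
    refine ⟨LinearPMap.sSup c hdir, ⟨?_, ?_⟩, fun z hz => LinearPMap.le_sSup hdir hz⟩
    · -- purity of the union
      intro m n G b hb hx
      set S : Set (Submodule R L) := LinearPMap.domain '' c with hS
      have hne : S.Nonempty := ⟨y.domain, Set.mem_image_of_mem _ hy⟩
      have hdirS : DirectedOn (· ≤ ·) S := by
        rintro _ ⟨q1, hq1, rfl⟩ _ ⟨q2, hq2, rfl⟩
        obtain ⟨q3, hq3, h13, h23⟩ := hdir q1 hq1 q2 hq2
        exact ⟨q3.domain, Set.mem_image_of_mem _ hq3, h13.1, h23.1⟩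
      have hmem : ∀ i, ∃ P ∈ S, b i ∈ P := fun i =>
        (Submodule.mem_sSup_of_directed hne hdirS).1 (hb i)
      choose P hP hbP using hmem
      haveI : Nonempty ↥S := hne.to_subtype
      have hdirSub : Directed (· ≤ ·) (Subtype.val : ↥S → Submodule R L) :=
        directedOn_iff_directed.1 hdirS
      obtain ⟨z, hz⟩ := hdirSub.finset_le (Finset.univ.image (fun i => (⟨P i, hP i⟩ : ↥S)))
      have hbz : ∀ i, b i ∈ (z : Submodule R L) := fun i =>
        hz _ (Finset.mem_image_of_mem _ (Finset.mem_univ i)) (hbP i)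
      obtain ⟨qz, hqz, hqzd⟩ := z.2
      have hpure : EPpair (z : Submodule R L) (⊤ : Submodule R L) := by
        rw [← hqzd]; exact (hcs hqz).1
      obtain ⟨yy, hyy, hyye⟩ := hpure m n G b hbz hx
      refine ⟨yy, fun j => ?_, hyye⟩
      have hzle : (z : Submodule R L) ≤ sSup S := le_sSup z.2
      exact hzle (hyy j)
    · -- D₀ and agreement
      obtain ⟨hy1, hy2, hy3⟩ : y ∈ s := hcs hy
      have hyle := LinearPMap.le_sSup hdir hy
      refine ⟨le_trans hy2 hyle.1, fun x => ?_⟩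
      rw [← hy3 x]
      exact (hyle.2 rfl).symm
  obtain ⟨m, hm0, hmax⟩ := zorn_le_nonempty₀ s hchains _ hbase
  · have htop : m.domain = ⊤ := by
      by_contra hne
      obtain ⟨x₀, hx₀⟩ : ∃ x₀ : L, x₀ ∉ m.domain := by
        by_contra h
        push_neg at h
        exact hne (Submodule.eq_top_iff'.2 h)
      obtain ⟨p', hle, hx₀', hp'⟩ := extend_step hQ m hmax.1.1 x₀
      have hp's : p' ∈ s := by
        refine ⟨hp', ?_⟩
        obtain ⟨hle0, hagr⟩ := hmax.1.2
        refine ⟨le_trans hle0 hle.1, fun x => ?_⟩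
        rw [← hagr x]
        exact (hle.2 rfl).symm
      exact hx₀ ((hmax.2 hp's hle).1 hx₀')
    set e := LinearEquiv.ofTop m.domain htop with he
    refine ⟨m.toFun ∘ₗ e.symm.toLinearMap, fun a ha => ?_⟩
    obtain ⟨hle0, hagr⟩ := hmax.1.2
    have h1 : e.symm a = ⟨a, hle0 ha⟩ := by
      apply e.injective
      rw [LinearEquiv.apply_symm_apply]
      rfl
    show m.toFun (e.symm a) = f₀ ⟨a, ha⟩
    rw [h1, ← hagr ⟨a, ha⟩]
    rfl
end Endgame

end PureGenAux

open PureGen PureGenAux CategoryTheory Limits in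
theorem pureInjectiveModule_iff_injective_wrt_set' (R : Type u) [Ring R] :
    ∃ (ι : Type u) (A B : ι → ModuleCat.{u} R) (x : ∀ i, A i ⟶ B i),
      ∀ Q : ModuleCat.{u} R,
        IsPureInjectiveModule R Q ↔ ∀ i (u : A i ⟶ Q), ∃ g : B i ⟶ Q, x i ≫ g = u := by
  classical
  refine ⟨PGI R, fun i => ModuleCat.of R ((BigFree R) ⧸ i.N₁),
    fun i => ModuleCat.of R ((BigFree R) ⧸ i.N₂), fun i => ModuleCat.ofHom i.φ, fun Q => ?_⟩
  constructor
  · intro hQ i uu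
    exact hQ (ModuleCat.ofHom i.φ) i.pure uu
  · intro hQ M N h hpure f
    obtain ⟨hinj, hEP⟩ := FE h hpure
    -- the range of h is elementwise pure in N
    have hD₀ : EPpair (LinearMap.range h.hom) (⊤ : Submodule R ↥N) := by
      intro m n G b hb hx
      obtain ⟨x, _, hxe⟩ := hx
      have hb' : ∀ i, ∃ b' : ↥M, h b' = b i := fun i => hb i
      choose b' hb' using hb'
      obtain ⟨y, hy⟩ := hEP m n G b' ⟨x, fun i => by rw [hb', hxe i]⟩
      refine ⟨fun j => h (y j), fun j => LinearMap.mem_range_self _ _, fun i => ?_⟩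
      rw [← hb' i, ← hy i, map_sum]
      simp [map_smul]
    set e := LinearEquiv.ofInjective h.hom hinj with he
    obtain ⟨g, hg⟩ := main (Q := ↥Q) (L := ↥N)
      (fun i uu => by
          obtain ⟨g, hg⟩ := hQ i (ModuleCat.ofHom uu)
          exact ⟨g.hom, congrArg ModuleCat.Hom.hom hg⟩) (LinearMap.range h.hom) hD₀ (f.hom ∘ₗ e.symm.toLinearMap)
    refine ⟨ModuleCat.ofHom g, ?_⟩
    apply ModuleCat.hom_ext; apply LinearMap.ext
    intro k
    show g (h k) = f k
    rw [hg (h k) (LinearMap.mem_range_self _ k)]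
    have h2 : e.symm ⟨h k, LinearMap.mem_range_self _ k⟩ = k := by
      apply e.injective
      rw [LinearEquiv.apply_symm_apply]
      apply Subtype.ext
      rfl
    show f (e.symm ⟨h k, LinearMap.mem_range_self _ k⟩) = f k
    rw [h2]

open PureGen PureGenAux CategoryTheory Limits in
/-- For any ring R, there is a set X of homomorphisms of R-modules such that an R-module
is pure injective iff it is injective with respect to every homomorphism in X. -/
theorem pureInjectiveModule_iff_injective_wrt_set (R : Type u) [Ring R] :
    ∃ (ι : Type u) (A B : ι → ModuleCat.{u} R) (x : ∀ i, A i ⟶ B i),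
      ∀ Q : ModuleCat.{u} R,
        IsPureInjectiveModule R Q ↔ ∀ i (u : A i ⟶ Q), ∃ g : B i ⟶ Q, x i ≫ g = u :=
  pureInjectiveModule_iff_injective_wrt_set' R
end

section
/- In any locally finitely presentable category, the class of pure monomorphisms is cofibrantly closed: it is closed under pushouts, transfinite compositions, and retracts in the category of morphisms. -/
open CategoryTheory Limits Opposite

universe w v u u₂

namespace PureGen

variable {C : Type u} [Category.{v} C]

section Aux

lemma isFP_of_iso {X Y : C} (e : X ≅ Y) (hY : IsFinitelyPresentableObj.{v} Y) :
    IsFinitelyPresentableObj.{v} X := by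
  intro J pJ dJ nJ
  haveI := hY J pJ dJ nJ
  exact preservesColimitsOfShape_of_natIso (coyoneda.mapIso e.op)

lemma map_eq_of_preorder {J : Type w} [Preorder J] (F : J ⥤ C) {a b : J} (f g : a ⟶ b) :
    F.map f = F.map g := by
  rw [Subsingleton.elim f g]

lemma fp_factor {J : Type v} [Preorder J] [IsDirected J (· ≤ ·)] [Nonempty J]
    {D : J ⥤ C} {c : Cocone D} (hc : IsColimit c) {N : C}
    (hN : IsFinitelyPresentableObj.{v} N) (v : N ⟶ c.pt) :
    ∃ (j : J) (w : N ⟶ D.obj j), w ≫ c.ι.app j = v := by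
  haveI := hN J ‹_› ‹_› ‹_›
  have hc' := isColimitOfPreserves (coyoneda.obj (op N)) hc
  obtain ⟨j, y, hy⟩ := Types.jointly_surjective_of_isColimit hc' v
  exact ⟨j, y, hy⟩

lemma fp_eq {J : Type v} [Preorder J] [IsDirected J (· ≤ ·)] [Nonempty J]
    {D : J ⥤ C} {c : Cocone D} (hc : IsColimit c) {M : C}
    (hM : IsFinitelyPresentableObj.{v} M) {j : J} (x y : M ⟶ D.obj j)
    (h : x ≫ c.ι.app j = y ≫ c.ι.app j) :
    ∃ (k : J) (hk : j ≤ k), x ≫ D.map (homOfLE hk) = y ≫ D.map (homOfLE hk) := by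
  haveI := hM J ‹_› ‹_› ‹_›
  have hc' := isColimitOfPreserves (coyoneda.obj (op M)) hc
  have h' : ((coyoneda.obj (op M)).mapCocone c).ι.app j x
      = ((coyoneda.obj (op M)).mapCocone c).ι.app j y := h
  obtain ⟨k, fk, gk, hfg⟩ :=
    (Types.FilteredColimit.isColimit_eq_iff (D ⋙ coyoneda.obj (op M)) hc').mp h'
  have hgf : gk = fk := Subsingleton.elim _ _
  subst hgf
  refine ⟨k, leOfHom gk, ?_⟩
  have : x ≫ D.map gk = y ≫ D.map gk := hfg
  rwa [Subsingleton.elim (homOfLE (leOfHom gk)) gk]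

lemma pure_id (X : C) : pureMonomorphisms C (𝟙 X) := by
  intro M N f u v _ _ hsq
  exact ⟨v, by rw [← hsq, Category.comp_id]⟩

lemma pure_comp {X Y Z : C} {f : X ⟶ Y} {g : Y ⟶ Z}
    (hf : pureMonomorphisms C f) (hg : pureMonomorphisms C g) :
    pureMonomorphisms C (f ≫ g) := by
  intro M N φ u v hM hN hsq
  obtain ⟨d, hd⟩ := hg φ (u ≫ f) v hM hN (by rw [← hsq, Category.assoc])
  exact hf φ u d hM hN hd.symm

lemma pure_of_split_s17 {X Y : C} (s : X ⟶ Y) (r : Y ⟶ X) (w : s ≫ r = 𝟙 X) :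
    pureMonomorphisms C s := by
  intro M N φ u v _ _ hsq
  refine ⟨v ≫ r, ?_⟩
  rw [← Category.assoc, ← hsq, Category.assoc, w, Category.comp_id]

lemma pure_of_directed_cocone {J : Type v} [Preorder J] [IsDirected J (· ≤ ·)] [Nonempty J]
    {D : J ⥤ C} {c : Cocone D} (hc : IsColimit c) {A : C}
    (a : (Functor.const J).obj A ⟶ D)
    (ha : ∀ j, pureMonomorphisms C (a.app j)) (j0 : J) :
    pureMonomorphisms C (a.app j0 ≫ c.ι.app j0) := by
  intro M N φ u v hM hN hsq
  have hnat : ∀ {i i' : J} (h : i ≤ i'), a.app i ≫ D.map (homOfLE h) = a.app i' := by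
    intro i i' h
    simpa using (a.naturality (homOfLE h)).symm
  obtain ⟨k1, v1, hv1⟩ := fp_factor hc hN v
  obtain ⟨k, hk0, hk1⟩ := directed_of (· ≤ ·) j0 k1
  have l1 : a.app k ≫ c.ι.app k = a.app j0 ≫ c.ι.app j0 := by
    rw [← hnat hk0, Category.assoc, c.w]
  have l2 : D.map (homOfLE hk1) ≫ c.ι.app k = c.ι.app k1 := c.w _
  have h1 : (u ≫ a.app k) ≫ c.ι.app k
      = (φ ≫ v1 ≫ D.map (homOfLE hk1)) ≫ c.ι.app k := by
    rw [Category.assoc, l1, hsq, ← hv1]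
    simp only [Category.assoc, l2]
  obtain ⟨k', hkk', he⟩ := fp_eq hc hM _ _ h1
  have h2 : u ≫ a.app k ≫ D.map (homOfLE hkk')
      = φ ≫ v1 ≫ D.map (homOfLE hk1) ≫ D.map (homOfLE hkk') := by
    simpa [Category.assoc] using he
  rw [hnat hkk', ← Functor.map_comp, homOfLE_comp] at h2
  have hsq' : u ≫ a.app k' = φ ≫ (v1 ≫ D.map (homOfLE (hk1.trans hkk'))) := by
    rw [← Category.assoc] at h2 ⊢
    exact h2
  exact ha k' φ u _ hM hN hsq'

end Aux

section PushAux

variable {J K : Type v} [Preorder J] [Preorder K]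

structure PresIdx (D : J ⥤ C) (E : K ⥤ C) (cJ : Cocone D) (cK : Cocone E)
    (f : cJ.pt ⟶ cK.pt) : Type v where
  j : J
  k : K
  h : D.obj j ⟶ E.obj k
  w : h ≫ cK.ι.app k = cJ.ι.app j ≫ f

variable {D : J ⥤ C} {E : K ⥤ C} {cJ : Cocone D} {cK : Cocone E} {f : cJ.pt ⟶ cK.pt}

instance : Preorder (PresIdx D E cJ cK f) where
  le i i' := ∃ (hj : i.j ≤ i'.j) (hk : i.k ≤ i'.k),
    D.map (homOfLE hj) ≫ i'.h = i.h ≫ E.map (homOfLE hk)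
  le_refl i := ⟨le_rfl, le_rfl, by
    rw [map_eq_of_preorder D (homOfLE le_rfl) (𝟙 i.j),
      map_eq_of_preorder E (homOfLE le_rfl) (𝟙 i.k)]
    simp⟩
  le_trans a b c hab hbc := by
    obtain ⟨hj1, hk1, hw1⟩ := hab
    obtain ⟨hj2, hk2, hw2⟩ := hbc
    refine ⟨hj1.trans hj2, hk1.trans hk2, ?_⟩
    rw [map_eq_of_preorder D (homOfLE (hj1.trans hj2)) (homOfLE hj1 ≫ homOfLE hj2),
      map_eq_of_preorder E (homOfLE (hk1.trans hk2)) (homOfLE hk1 ≫ homOfLE hk2),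
      Functor.map_comp, Functor.map_comp, Category.assoc, hw2, ← Category.assoc, hw1,
      Category.assoc]

lemma PresIdx.le_j {i i' : PresIdx D E cJ cK f} (h : i ≤ i') : i.j ≤ i'.j := by
  obtain ⟨hj, -, -⟩ := h; exact hj

lemma PresIdx.le_k {i i' : PresIdx D E cJ cK f} (h : i ≤ i') : i.k ≤ i'.k := by
  obtain ⟨-, hk, -⟩ := h; exact hk

lemma PresIdx.le_w {i i' : PresIdx D E cJ cK f} (h : i ≤ i') :
    D.map (homOfLE (PresIdx.le_j h)) ≫ i'.h = i.h ≫ E.map (homOfLE (PresIdx.le_k h)) := by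
  obtain ⟨hj, hk, hw⟩ := h; exact hw

variable (D E cJ cK f)

@[simps]
def piJ : PresIdx D E cJ cK f ⥤ J where
  obj i := i.j
  map φ := homOfLE (PresIdx.le_j (leOfHom φ))
  map_id _ := Subsingleton.elim _ _
  map_comp _ _ := Subsingleton.elim _ _

@[simps]
def piK : PresIdx D E cJ cK f ⥤ K where
  obj i := i.k
  map φ := homOfLE (PresIdx.le_k (leOfHom φ))
  map_id _ := Subsingleton.elim _ _
  map_comp _ _ := Subsingleton.elim _ _

variable {D E cJ cK f}

lemma presIdx_exists (hcK : IsColimit cK) [IsDirected K (· ≤ ·)] [Nonempty K]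
    (hD : ∀ j, IsFinitelyPresentableObj.{v} (D.obj j)) (j : J) :
    ∃ i : PresIdx D E cJ cK f, i.j = j := by
  obtain ⟨k, h, hw⟩ := fp_factor hcK (hD j) (cJ.ι.app j ≫ f)
  exact ⟨⟨j, k, h, hw⟩, rfl⟩

lemma presIdx_directed (hcK : IsColimit cK) [IsDirected J (· ≤ ·)] [IsDirected K (· ≤ ·)]
    [Nonempty K]
    (hD : ∀ j, IsFinitelyPresentableObj.{v} (D.obj j)) :
    IsDirected (PresIdx D E cJ cK f) (· ≤ ·) := by
  constructor
  intro i1 i2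
  obtain ⟨j, hj1, hj2⟩ := directed_of (· ≤ ·) i1.j i2.j
  obtain ⟨k0, h0, hw0⟩ := fp_factor hcK (hD j) (cJ.ι.app j ≫ f)
  obtain ⟨ka, hka1, hka2⟩ := directed_of (· ≤ ·) i1.k i2.k
  obtain ⟨k', h1, h2⟩ := directed_of (· ≤ ·) k0 ka
  have e1 : (D.map (homOfLE hj1) ≫ h0 ≫ E.map (homOfLE h1)) ≫ cK.ι.app k'
      = (i1.h ≫ E.map (homOfLE (hka1.trans h2))) ≫ cK.ι.app k' := by
    simp only [Category.assoc, Cocone.w]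
    rw [hw0, i1.w, ← Category.assoc, Cocone.w]
  obtain ⟨k1, hk1, he1⟩ := fp_eq hcK (hD i1.j) _ _ e1
  have e2 : (D.map (homOfLE hj2) ≫ h0 ≫ E.map (homOfLE (h1.trans hk1))) ≫ cK.ι.app k1
      = (i2.h ≫ E.map (homOfLE ((hka2.trans h2).trans hk1))) ≫ cK.ι.app k1 := by
    simp only [Category.assoc, Cocone.w]
    rw [hw0, i2.w, ← Category.assoc, Cocone.w]
  obtain ⟨k2, hk2, he2⟩ := fp_eq hcK (hD i2.j) _ _ e2
  refine ⟨⟨j, k2, h0 ≫ E.map (homOfLE ((h1.trans hk1).trans hk2)), by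
    simp only [Category.assoc, Cocone.w]
    rw [hw0]⟩, ?_, ?_⟩
  · refine ⟨hj1, ((hka1.trans h2).trans hk1).trans hk2, ?_⟩
    have h3 := congrArg (fun z => z ≫ E.map (homOfLE hk2)) he1
    simp only [Category.assoc, ← Functor.map_comp, homOfLE_comp] at h3 ⊢
    exact h3
  · refine ⟨hj2, (((hka2.trans h2).trans hk1).trans hk2), ?_⟩
    simp only [Category.assoc, ← Functor.map_comp, homOfLE_comp] at he2 ⊢
    exact he2

lemma piJ_final (hcK : IsColimit cK) [IsDirected J (· ≤ ·)] [IsDirected K (· ≤ ·)]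
    [Nonempty K]
    (hD : ∀ j, IsFinitelyPresentableObj.{v} (D.obj j)) :
    (piJ D E cJ cK f).Final := by
  haveI := presIdx_directed (f := f) (E := E) hcK hD
  apply Functor.final_of_exists_of_isFiltered
  · intro j
    obtain ⟨i, hi⟩ := presIdx_exists (f := f) (E := E) hcK hD j
    exact ⟨i, ⟨homOfLE hi.ge⟩⟩
  · intro d c s s'
    exact ⟨c, 𝟙 c, Subsingleton.elim _ _⟩

lemma piK_final (hcK : IsColimit cK) [IsDirected J (· ≤ ·)] [IsDirected K (· ≤ ·)]
    [Nonempty J] [Nonempty K]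
    (hD : ∀ j, IsFinitelyPresentableObj.{v} (D.obj j)) :
    (piK D E cJ cK f).Final := by
  haveI := presIdx_directed (f := f) (E := E) hcK hD
  apply Functor.final_of_exists_of_isFiltered
  · intro k
    obtain ⟨j⟩ := (inferInstance : Nonempty J)
    obtain ⟨i0, -⟩ := presIdx_exists (f := f) (E := E) hcK hD j
    obtain ⟨k', h1, h2⟩ := directed_of (· ≤ ·) k i0.k
    refine ⟨⟨i0.j, k', i0.h ≫ E.map (homOfLE h2), by
      rw [Category.assoc, Cocone.w, i0.w]⟩, ⟨homOfLE h1⟩⟩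
  · intro d c s s'
    exact ⟨c, 𝟙 c, Subsingleton.elim _ _⟩

section Q

variable [HasPushouts C] {A' B' : C} (g : cJ.pt ⟶ A') (f' : A' ⟶ B') (g' : cK.pt ⟶ B')

variable (D E cJ cK f)

@[simps, reducible]
noncomputable def qFunctor : PresIdx D E cJ cK f ⥤ C where
  obj i := pushout i.h (cJ.ι.app i.j ≫ g)
  map {i i'} φ := pushout.desc
    (E.map (homOfLE (PresIdx.le_k (leOfHom φ))) ≫ pushout.inl _ _) (pushout.inr _ _)
    (by
      rw [← Category.assoc, ← PresIdx.le_w (leOfHom φ), Category.assoc, pushout.condition,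
        ← Category.assoc, ← Category.assoc, Cocone.w])
  map_id i := by
    apply pushout.hom_ext
    · rw [pushout.inl_desc, Category.comp_id,
        map_eq_of_preorder E (homOfLE (PresIdx.le_k (leOfHom (𝟙 i)))) (𝟙 i.k),
        E.map_id, Category.id_comp]
    · rw [pushout.inr_desc, Category.comp_id]
  map_comp {i i' i''} φ ψ := by
    apply pushout.hom_ext
    · rw [pushout.inl_desc, ← Category.assoc, pushout.inl_desc, Category.assoc,
        pushout.inl_desc, ← Category.assoc, ← E.map_comp, homOfLE_comp]
    · rw [pushout.inr_desc, ← Category.assoc, pushout.inr_desc, pushout.inr_desc]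

@[simps]
noncomputable def qCocone (hw : f ≫ g' = g ≫ f') : Cocone (qFunctor D E cJ cK f g) where
  pt := B'
  ι :=
    { app := fun i => pushout.desc (cK.ι.app i.k ≫ g') f' (by
        rw [← Category.assoc, i.w, Category.assoc, hw, ← Category.assoc])
      naturality := fun i i' φ => by
        apply pushout.hom_ext
        · erw [pushout.inl_desc_assoc, Category.assoc, pushout.inl_desc, Functor.const_obj_map, Category.comp_id, pushout.inl_desc, ← Category.assoc, Cocone.w]
        · erw [pushout.inr_desc_assoc, pushout.inr_desc, Functor.const_obj_map, Category.comp_id, pushout.inr_desc] }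

@[simps]
noncomputable def qIns : (Functor.const (PresIdx D E cJ cK f)).obj A' ⟶ qFunctor D E cJ cK f g where
  app i := pushout.inr _ _
  naturality i i' φ := by
    simp only [qFunctor_map, pushout.inr_desc]
    exact Category.id_comp _

@[simps]
noncomputable def bCocone (s : Cocone (qFunctor D E cJ cK f g)) : Cocone (piK D E cJ cK f ⋙ E) where
  pt := s.pt
  ι :=
    { app := fun i => pushout.inl _ _ ≫ s.ι.app i
      naturality := fun i i' φ => by
        have h1 : pushout.inl _ _ ≫ (qFunctor D E cJ cK f g).map φ
            = E.map (homOfLE (PresIdx.le_k (leOfHom φ))) ≫ pushout.inl _ _ := by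
          rw [qFunctor_map, pushout.inl_desc]
        show E.map (homOfLE (PresIdx.le_k (leOfHom φ))) ≫ (pushout.inl _ _ ≫ s.ι.app i')
            = (pushout.inl _ _ ≫ s.ι.app i) ≫ 𝟙 s.pt
        calc E.map (homOfLE (PresIdx.le_k (leOfHom φ))) ≫ (pushout.inl _ _ ≫ s.ι.app i')
            = (E.map (homOfLE (PresIdx.le_k (leOfHom φ))) ≫ pushout.inl _ _) ≫ s.ι.app i' :=
              (Category.assoc _ _ _).symm
          _ = (pushout.inl _ _ ≫ (qFunctor D E cJ cK f g).map φ) ≫ s.ι.app i' := by rw [h1]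
          _ = pushout.inl _ _ ≫ ((qFunctor D E cJ cK f g).map φ ≫ s.ι.app i') :=
              Category.assoc _ _ _
          _ = pushout.inl _ _ ≫ s.ι.app i := by rw [s.w φ]
          _ = (pushout.inl _ _ ≫ s.ι.app i) ≫ 𝟙 s.pt := (Category.comp_id _).symm }

noncomputable def qCocone_isColimit
    [Nonempty (PresIdx D E cJ cK f)] [IsDirected (PresIdx D E cJ cK f) (· ≤ ·)]
    (hcA : IsColimit (cJ.whisker (piJ D E cJ cK f)))
    (hcB : IsColimit (cK.whisker (piK D E cJ cK f)))
    (hpo : IsPushout g f f' g') :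
    IsColimit (qCocone D E cJ cK f g f' g' hpo.w.symm) := by
  have hinr : ∀ (s : Cocone (qFunctor D E cJ cK f g)) {a b : PresIdx D E cJ cK f} (hab : a ≤ b),
      pushout.inr _ _ ≫ s.ι.app b = pushout.inr _ _ ≫ s.ι.app a := by
    intro s a b hab
    conv_rhs => rw [← s.w (homOfLE hab)]
    rw [← Category.assoc, qFunctor_map, pushout.inr_desc]
  have hinr2 : ∀ (s : Cocone (qFunctor D E cJ cK f g)) (a b : PresIdx D E cJ cK f),
      pushout.inr _ _ ≫ s.ι.app a = pushout.inr _ _ ≫ s.ι.app b := by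
    intro s a b
    obtain ⟨c, h1, h2⟩ := directed_of (· ≤ ·) a b
    rw [← hinr s h1, ← hinr s h2]
  let i₀ : PresIdx D E cJ cK f := Classical.arbitrary _
  have hβ : ∀ (s : Cocone (qFunctor D E cJ cK f g)) (i : PresIdx D E cJ cK f),
      cK.ι.app i.k ≫ hcB.desc (bCocone D E cJ cK f g s) = pushout.inl _ _ ≫ s.ι.app i :=
    fun s i => hcB.fac (bCocone D E cJ cK f g s) i
  have hw' : ∀ s : Cocone (qFunctor D E cJ cK f g),
      g ≫ (pushout.inr _ _ ≫ s.ι.app i₀) = f ≫ hcB.desc (bCocone D E cJ cK f g s) := by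
    intro s
    apply hcA.hom_ext
    intro i
    show cJ.ι.app i.j ≫ g ≫ pushout.inr _ _ ≫ s.ι.app i₀
        = cJ.ι.app i.j ≫ f ≫ hcB.desc (bCocone D E cJ cK f g s)
    rw [← hinr2 s i i₀]
    simp only [← Category.assoc]
    erw [← pushout.condition, Category.assoc, ← hβ s i, ← Category.assoc, i.w, Category.assoc]
  refine ⟨fun s => hpo.desc (pushout.inr _ _ ≫ s.ι.app i₀)
      (hcB.desc (bCocone D E cJ cK f g s)) (hw' s), ?_, ?_⟩
  · intro s i
    apply pushout.hom_ext
    · erw [← Category.assoc, qCocone_ι_app, pushout.inl_desc, Category.assoc,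
        IsPushout.inr_desc, hβ s i]
    · erw [← Category.assoc, qCocone_ι_app, pushout.inr_desc, IsPushout.inl_desc]
      exact hinr2 s i₀ i
  · intro s m hm
    apply hpo.hom_ext
    · have hf'0 : pushout.inr _ _ ≫ (qCocone D E cJ cK f g f' g' hpo.w.symm).ι.app i₀ = f' := by
        erw [qCocone_ι_app, pushout.inr_desc]
      erw [IsPushout.inl_desc, ← hf'0, Category.assoc, hm i₀]
    · erw [IsPushout.inr_desc]
      apply hcB.hom_ext
      intro i
      show cK.ι.app i.k ≫ g' ≫ m = cK.ι.app i.k ≫ hcB.desc (bCocone D E cJ cK f g s)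
      rw [hβ s i]
      have h1 : pushout.inl _ _ ≫ (qCocone D E cJ cK f g f' g' hpo.w.symm).ι.app i
          = cK.ι.app i.k ≫ g' := by
        erw [qCocone_ι_app, pushout.inl_desc]
      erw [← Category.assoc, ← h1, Category.assoc, hm i]

end Q

end PushAux

end PureGen

open PureGen CategoryTheory Limits in
/-- In any locally finitely presentable category, the class of pure monomorphisms is
cofibrantly closed: closed under pushouts, transfinite compositions, and retracts in
the arrow category. -/
theorem pureMonomorphisms_cofibrantlyClosed
    (C : Type u) [Category.{v} C] (hC : PureGen.IsLocallyFinitelyPresentable C) :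
    IsCofibrantlyClosed (pureMonomorphisms C) := by
  constructor
  · -- pushout
    intro A B A' B' f g f' g' hpo hf
    obtain ⟨hcolall, ι0, AF, hAF, hpres⟩ := hC
    haveI : HasColimits C := hcolall
    obtain ⟨J, pJ, dJ, nJ, D, cJ, ⟨hcJ⟩, hpt, hDiso⟩ := hpres A
    letI := pJ; haveI := dJ; haveI := nJ
    subst hpt
    obtain ⟨K, pK, dK, nK, E, cK, ⟨hcK⟩, hpt2, hEiso⟩ := hpres B
    letI := pK; haveI := dK; haveI := nK
    subst hpt2
    have hD : ∀ j, IsFinitelyPresentableObj.{v} (D.obj j) := fun j => by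
      obtain ⟨i, ⟨e⟩⟩ := hDiso j
      exact isFP_of_iso e (hAF i)
    have hE : ∀ k, IsFinitelyPresentableObj.{v} (E.obj k) := fun k => by
      obtain ⟨i, ⟨e⟩⟩ := hEiso k
      exact isFP_of_iso e (hAF i)
    haveI hdir : IsDirected (PresIdx D E cJ cK f) (· ≤ ·) := presIdx_directed hcK hD
    haveI : Nonempty (PresIdx D E cJ cK f) := by
      obtain ⟨j⟩ := (inferInstance : Nonempty J)
      obtain ⟨i, -⟩ := presIdx_exists (f := f) (E := E) (cK := cK) hcK hD j
      exact ⟨i⟩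
    haveI : (piJ D E cJ cK f).Final := piJ_final hcK hD
    haveI : (piK D E cJ cK f).Final := piK_final hcK hD
    have hcA : IsColimit (cJ.whisker (piJ D E cJ cK f)) :=
      (Functor.Final.isColimitWhiskerEquiv (piJ D E cJ cK f) cJ).symm hcJ
    have hcB : IsColimit (cK.whisker (piK D E cJ cK f)) :=
      (Functor.Final.isColimitWhiskerEquiv (piK D E cJ cK f) cK).symm hcK
    have hQcol := qCocone_isColimit D E cJ cK f g f' g' hcA hcB hpo
    have hpure : ∀ i : PresIdx D E cJ cK f,
        pureMonomorphisms C ((qIns D E cJ cK f g).app i) := by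
      intro i
      obtain ⟨t, ht⟩ := hf i.h (cJ.ι.app i.j) (cK.ι.app i.k) (hD i.j) (hE i.k) i.w.symm
      refine pure_of_split_s17 _ (pushout.desc (t ≫ g) (𝟙 A') ?_) ?_
      · rw [← Category.assoc, ht, Category.comp_id]
      · rw [qIns_app, pushout.inr_desc]
        rfl
    have hp := pure_of_directed_cocone hQcol (qIns D E cJ cK f g) hpure (Classical.arbitrary _)
    have he : (qIns D E cJ cK f g).app (Classical.arbitrary _)
        ≫ (qCocone D E cJ cK f g f' g' hpo.w.symm).ι.app (Classical.arbitrary _) = f' := by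
      erw [qIns_app, qCocone_ι_app, pushout.inr_desc]
    rwa [he] at hp
  · -- transfinite
    intro J linJ botJ succJ wfJ F c hc hlim hsucc
    letI := linJ; letI := botJ; letI := succJ; haveI := wfJ
    haveI : Nonempty J := ⟨⊥⟩
    have key : ∀ j : J, pureMonomorphisms C (F.map (homOfLE (bot_le : (⊥ : J) ≤ j))) := by
      intro j
      induction j using WellFoundedLT.induction with
      | _ j IH =>
        rcases eq_or_ne j ⊥ with rfl | hne
        · rw [Subsingleton.elim (homOfLE (bot_le : (⊥ : J) ≤ ⊥)) (𝟙 (⊥ : J)), F.map_id]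
          exact pure_id _
        · by_cases hl : Order.IsSuccLimit j
          · obtain ⟨hcl⟩ := hlim j hl
            have hbot : (⊥ : J) < j := bot_lt_iff_ne_bot.mpr hne
            haveI : Nonempty (Set.Iio j) := ⟨⟨⊥, hbot⟩⟩
            let a : (Functor.const (Set.Iio j)).obj (F.obj ⊥) ⟶ (iioFunctor j ⋙ F) :=
              { app := fun i => F.map (homOfLE (bot_le : (⊥ : J) ≤ i.1))
                naturality := by
                  intro i i' φ
                  show 𝟙 (F.obj ⊥) ≫ F.map (homOfLE (bot_le : (⊥ : J) ≤ i'.1))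
                    = F.map (homOfLE (bot_le : (⊥ : J) ≤ i.1)) ≫ F.map ((iioFunctor j).map φ)
                  erw [Category.id_comp, ← F.map_comp]
                  exact map_eq_of_preorder F _ _ }
            have hp := pure_of_directed_cocone hcl a (fun i => IH i.1 i.2) ⟨⊥, hbot⟩
            have he : a.app ⟨⊥, hbot⟩ ≫ (coconeLT F j).ι.app ⟨⊥, hbot⟩
                = F.map (homOfLE (bot_le : (⊥ : J) ≤ j)) := by
              show F.map _ ≫ F.map _ = _
              rw [← F.map_comp]
              exact map_eq_of_preorder F _ _
            rwa [he] at hp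
          · have hpre : ¬ Order.IsSuccPrelimit j := by
              intro hp
              exact hl ⟨fun hmin => hne hmin.eq_bot, hp⟩
            obtain ⟨i, hcov⟩ := not_forall_not.mp hpre
            have hlt : i < j := hcov.lt
            have hmax : ¬ IsMax i := hlt.not_isMax
            have hs := hsucc i hmax
            have hsi : Order.succ i = j := hcov.succ_eq
            subst hsi
            rw [Subsingleton.elim (homOfLE (bot_le : (⊥ : J) ≤ Order.succ i))
              (homOfLE (bot_le : (⊥ : J) ≤ i) ≫ homOfLE (Order.le_succ i)), F.map_comp]
            exact pure_comp (IH i hlt) hs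
    let a : (Functor.const J).obj (F.obj ⊥) ⟶ F :=
      { app := fun j => F.map (homOfLE (bot_le : (⊥ : J) ≤ j))
        naturality := by
          intro i i' φ
          show 𝟙 (F.obj ⊥) ≫ F.map (homOfLE (bot_le : (⊥ : J) ≤ i'))
            = F.map (homOfLE (bot_le : (⊥ : J) ≤ i)) ≫ F.map φ
          rw [Category.id_comp, ← F.map_comp]
          exact map_eq_of_preorder F _ _ }
    have hp := pure_of_directed_cocone hc a (fun j => key j) ⊥
    have he : a.app ⊥ ≫ c.ι.app ⊥ = c.ι.app ⊥ := by
      show F.map _ ≫ _ = _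
      rw [Subsingleton.elim (homOfLE (bot_le : (⊥ : J) ≤ ⊥)) (𝟙 (⊥ : J)), F.map_id,
        Category.id_comp]
    rwa [he] at hp
  · -- retract
    rintro X Y X' Y' f f' ⟨i, r, hir⟩ hf'
    intro M N φ u v hM hN hsq
    have hw : i.left ≫ f' = f ≫ i.right := by simpa using i.w
    obtain ⟨g, hg⟩ := hf' φ (u ≫ i.left) (v ≫ i.right) hM hN (by
      rw [Category.assoc, hw, ← Category.assoc, hsq, Category.assoc])
    refine ⟨g ≫ r.left, ?_⟩
    have hl : i.left ≫ r.left = 𝟙 X := by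
      have := congrArg CommaMorphism.left hir
      simpa using this
    rw [← Category.assoc, hg, Category.assoc, hl, Category.comp_id]
end
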